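/- arXiv:1801.08232 — 6 statements merged into one kernel-verified Lean document; each statement's English description precedes it below -/
import Mathlib

section
/- Let $n \ge 3$ and $\Phi(x) = \frac{1}{n(n-2)\omega_n} |x|^{2-n}$ be the fundamental solution of the Laplacian, where $\omega_n$ is the volume of the unit ball. If $\vec{d} \in \mathbb{R}^n$ is nonzero, then $\|(\vec{d} \cdot \nabla \Phi)^-\|_{L^{n/(n-1)}(B_{1/2})} = +\infty$. -/
/-!
With `p = n / (n - 1)`, the integrand `((d·∇Φ)⁻)^p` is positively homogeneous of degree
`(1 - n) p = -n`, while Lebesgue measure scales with degree `n`. The integrand is bounded below by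
a positive constant on the ball of radius `1/4` around `(3/4) d / ‖d‖`, which lies in the shell
`1/2 < ‖x‖ < 1`; by scaling, its images in the infinitely many disjoint dyadic shells inside
`B_{1/2}` all carry the same positive lower bound for the integral.
-/

open MeasureTheory Metric Real Set Module Function
open scoped RealInnerProductSpace ENNReal Pointwise

theorem pairwise_disjoint_dyadic_annuli {α : Type*} [PseudoMetricSpace α] (x : α) {r : ℝ}
    (hr : 0 ≤ r) :
    Pairwise (Disjoint on fun k : ℕ => ball x (r / 2 ^ k) \ closedBall x (r / 2 ^ (k + 1))) := by
  refine (pairwise_disjoint_on _).2 fun j k hjk => ?_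
  have hr : r / 2 ^ k ≤ r / 2 ^ (j + 1) :=
    div_le_div_of_nonneg_left hr (by positivity) (pow_le_pow_right₀ one_le_two hjk)
  exact disjoint_sdiff_left.mono_right <|
    sdiff_subset.trans <| ball_subset_closedBall.trans <| closedBall_subset_closedBall hr

theorem ball_subset_ball_sdiff_closedBall {E : Type*} [SeminormedAddCommGroup E] {x₀ : E}
    (hx₀ : ‖x₀‖ = 3 / 4) : ball x₀ (1 / 4) ⊆ ball 0 1 \ closedBall 0 (1 / 2) := by
  intro x hx
  rw [mem_ball_iff_norm] at hx
  have h₁ := norm_le_norm_add_norm_sub' x x₀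
  have h₂ := norm_sub_norm_le x₀ x
  rw [norm_sub_rev] at h₂
  simp only [mem_sdiff, mem_ball_zero_iff, mem_closedBall_zero_iff, not_le]
  constructor <;> linarith

section NormedSpace

variable {E : Type*} [NormedAddCommGroup E] [NormedSpace ℝ E]

theorem norm_smul_div_norm {d : E} (hd : d ≠ 0) {c : ℝ} (hc : 0 ≤ c) : ‖(c / ‖d‖) • d‖ = c := by
  rw [norm_smul, norm_div, norm_norm, norm_of_nonneg hc, div_mul_cancel₀ _ (norm_ne_zero_iff.2 hd)]

theorem smul_ball_sdiff_closedBall_half {t : ℝ} (ht : 0 < t) :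
    t • (ball (0 : E) 1 \ closedBall 0 (1 / 2)) = ball 0 t \ closedBall 0 (t / 2) := by
  rw [smul_set_sdiff₀ ht.ne', _root_.smul_ball ht.ne', _root_.smul_closedBall _ _ (by norm_num),
    smul_zero, norm_of_nonneg ht.le]
  ring_nf

variable [FiniteDimensional ℝ E] [MeasurableSpace E] [BorelSpace E] (μ : Measure E)
  [μ.IsAddHaarMeasure] {f : E → ℝ≥0∞}

theorem le_setLIntegral_smul_of_homogeneous
    (hf : ∀ t : ℝ, 0 < t → ∀ x, f (t • x) = ENNReal.ofReal (t ^ (-(finrank ℝ E : ℝ))) * f x)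
    {S : Set E} (hS : MeasurableSet S) {m : ℝ≥0∞} (hm : ∀ x ∈ S, m ≤ f x) {t : ℝ} (ht : 0 < t) :
    m * μ S ≤ ∫⁻ x in t • S, f x ∂μ := by
  set c := ENNReal.ofReal (t ^ (-(finrank ℝ E : ℝ)))
  have hc : c * ENNReal.ofReal (t ^ finrank ℝ E) = 1 := by
    rw [← ENNReal.ofReal_mul (by positivity), rpow_neg ht.le, rpow_natCast,
      inv_mul_cancel₀ (by positivity), ENNReal.ofReal_one]
  calc m * μ S = m * (c * ENNReal.ofReal (t ^ finrank ℝ E)) * μ S := by rw [hc, mul_one]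
    _ = ∫⁻ _ in t • S, c * m ∂μ := by
        rw [setLIntegral_const, Measure.addHaar_smul_of_nonneg μ ht.le]; ring
    _ ≤ ∫⁻ x in t • S, f x ∂μ := by
        refine setLIntegral_mono' (hS.const_smul₀ t) ?_
        rintro _ ⟨y, hy, rfl⟩
        rw [hf t ht y]
        gcongr
        exact hm y hy

theorem setLIntegral_ball_eq_top_of_homogeneous
    (hf : ∀ t : ℝ, 0 < t → ∀ x, f (t • x) = ENNReal.ofReal (t ^ (-(finrank ℝ E : ℝ))) * f x)
    {S : Set E} (hS : MeasurableSet S) (hSμ : μ S ≠ 0)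
    (hS_sub : S ⊆ ball 0 1 \ closedBall 0 (1 / 2)) {m : ℝ≥0∞} (hm₀ : m ≠ 0)
    (hm : ∀ x ∈ S, m ≤ f x) {r : ℝ} (hr : 0 < r) :
    ∫⁻ x in ball 0 r, f x ∂μ = ⊤ := by
  set T : ℕ → Set E := fun k => (r / 2 ^ k) • S
  have hT_sub : ∀ k, T k ⊆ ball 0 (r / 2 ^ k) \ closedBall 0 (r / 2 ^ (k + 1)) := fun k =>
    calc T k ⊆ (r / 2 ^ k) • (ball (0 : E) 1 \ closedBall 0 (1 / 2)) := smul_set_mono hS_sub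
      _ = _ := by rw [smul_ball_sdiff_closedBall_half (by positivity), pow_succ, div_div]
  have hT_disj : Pairwise (Disjoint on T) :=
    (pairwise_disjoint_dyadic_annuli 0 hr.le).mono fun j k h => h.mono (hT_sub j) (hT_sub k)
  have hT_ball : (⋃ k, T k) ⊆ ball 0 r := iUnion_subset fun k => (hT_sub k).trans <|
    sdiff_subset.trans <| ball_subset_ball <| div_le_self hr.le (one_le_pow₀ one_le_two)
  refine eq_top_iff.2 ?_
  calc ⊤ = ∑' _ : ℕ, m * μ S := (ENNReal.tsum_const_eq_top_of_ne_zero (mul_ne_zero hm₀ hSμ)).symm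
    _ ≤ ∑' k, ∫⁻ x in T k, f x ∂μ := ENNReal.tsum_le_tsum fun k =>
        le_setLIntegral_smul_of_homogeneous μ hf hS hm (by positivity)
    _ = ∫⁻ x in ⋃ k, T k, f x ∂μ := (lintegral_iUnion (fun k => hS.const_smul₀ _) hT_disj _).symm
    _ ≤ ∫⁻ x in ball 0 r, f x ∂μ := lintegral_mono_set hT_ball

end NormedSpace

theorem ofReal_max_rpow_mul_rpow {t : ℝ} (ht : 0 ≤ t) (k p y : ℝ) :
    ENNReal.ofReal (max (t ^ k * y) 0 ^ p) =
      ENNReal.ofReal (t ^ (k * p)) * ENNReal.ofReal (max y 0 ^ p) := by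
  have htk : 0 ≤ t ^ k := rpow_nonneg ht k
  have hmax : max (t ^ k * y) 0 = t ^ k * max y 0 := by rw [mul_max_of_nonneg _ _ htk, mul_zero]
  rw [← ENNReal.ofReal_mul (rpow_nonneg ht _), hmax, mul_rpow htk (le_max_right _ _), rpow_mul ht]

section InnerProductSpace

variable {F : Type*} [NormedAddCommGroup F] [InnerProductSpace ℝ F]

theorem mul_norm_rpow_mul_inner_smul (C a : ℝ) (d x : F) {t : ℝ} (ht : 0 < t) :
    C * ‖t • x‖ ^ (-a) * ⟪d, t • x⟫ = t ^ (1 - a) * (C * ‖x‖ ^ (-a) * ⟪d, x⟫) := by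
  rw [norm_smul, norm_of_nonneg ht.le, mul_rpow ht.le (norm_nonneg x), real_inner_smul_right,
    sub_eq_add_neg, rpow_add ht, rpow_one]
  ring

theorem half_norm_lt_inner_of_mem_ball {d x : F} (hd : d ≠ 0)
    (hx : x ∈ ball ((3 / 4 / ‖d‖) • d) (1 / 4)) : ‖d‖ / 2 < ⟪d, x⟫ := by
  have hd₀ : 0 < ‖d‖ := norm_pos_iff.2 hd
  rw [mem_ball_iff_norm] at hx
  have hcenter : ⟪d, (3 / 4 / ‖d‖) • d⟫ = 3 / 4 * ‖d‖ := by
    rw [real_inner_smul_right, real_inner_self_eq_norm_sq]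
    field_simp
  have hCS : -(‖d‖ * ‖x - (3 / 4 / ‖d‖) • d‖) ≤ ⟪d, x - (3 / 4 / ‖d‖) • d⟫ :=
    neg_le_of_abs_le (abs_real_inner_le_norm _ _)
  rw [inner_sub_right, hcenter] at hCS
  nlinarith

theorem mul_half_norm_le_of_mem_ball {d x : F} (hd : d ≠ 0)
    (hx : x ∈ ball ((3 / 4 / ‖d‖) • d) (1 / 4)) {C a : ℝ} (hC : 0 ≤ C) (ha : 0 ≤ a) :
    C * (‖d‖ / 2) ≤ C * ‖x‖ ^ (-a) * ⟪d, x⟫ := by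
  have hx' :=
    ball_subset_ball_sdiff_closedBall (norm_smul_div_norm hd (c := 3 / 4) (by norm_num)) hx
  simp only [mem_sdiff, mem_ball_zero_iff, mem_closedBall_zero_iff, not_le] at hx'
  have hinner := half_norm_lt_inner_of_mem_ball hd hx
  have hnorm : 1 ≤ ‖x‖ ^ (-a) :=
    one_le_rpow_of_pos_of_le_one_of_nonpos (by linarith [hx'.2]) hx'.1.le (neg_nonpos.2 ha)
  calc C * (‖d‖ / 2) ≤ C * 1 * ⟪d, x⟫ := by rw [mul_one]; gcongr
    _ ≤ C * ‖x‖ ^ (-a) * ⟪d, x⟫ := by gcongr; linarith [norm_nonneg d]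

end InnerProductSpace

/-- If `d ≠ 0`, the negative part of `d · ∇Φ`, where `Φ(x) = (n(n-2)ω_n)⁻¹|x|^{2-n}` is the
fundamental solution of the Laplacian (so `d·∇Φ(x) = -(nω_n)⁻¹ |x|^{-n} ⟨d,x⟩`), is not in
`L^{n/(n-1)}(B_{1/2})`. -/
theorem grad_fundamental_solution_neg_part_not_Lp
    (n : ℕ) (hn : 3 ≤ n)
    (ωn : ℝ) (hω : ωn = (volume (ball (0 : EuclideanSpace ℝ (Fin n)) 1)).toReal)
    (d : EuclideanSpace ℝ (Fin n)) (hd : d ≠ 0) :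
    ∫⁻ x in ball (0 : EuclideanSpace ℝ (Fin n)) (1/2),
        ENNReal.ofReal
          ((max (-(-(1 / ((n:ℝ) * ωn)) * ‖x‖ ^ (-(n:ℝ)) * ⟪d, x⟫)) 0)
            ^ ((n:ℝ) / ((n:ℝ) - 1))) = ⊤ := by
  have hn₁ : (1 : ℝ) < n := by exact_mod_cast (by omega : 1 < n)
  have hω₀ : 0 < ωn :=
    hω ▸ ENNReal.toReal_pos (measure_ball_pos _ _ one_pos).ne' measure_ball_lt_top.ne
  set C := 1 / ((n : ℝ) * ωn)
  set p := (n : ℝ) / (n - 1)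
  have hexp : (1 - n) * p = -n := by
    have : (n : ℝ) - 1 ≠ 0 := by linarith
    simp only [p]
    field_simp
    ring
  simp only [neg_mul, neg_neg]
  refine setLIntegral_ball_eq_top_of_homogeneous volume (m := ENNReal.ofReal ((C * (‖d‖ / 2)) ^ p))
    (fun t ht x => ?_) measurableSet_ball (measure_ball_pos _ _ (by norm_num)).ne'
    (ball_subset_ball_sdiff_closedBall (norm_smul_div_norm hd (by norm_num)))
    (ENNReal.ofReal_pos.2 (by positivity)).ne' (fun x hx => ?_) (by norm_num)
  · rw [finrank_euclideanSpace_fin, mul_norm_rpow_mul_inner_smul _ _ _ _ ht,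
      ofReal_max_rpow_mul_rpow ht.le, hexp]
  · exact ENNReal.ofReal_le_ofReal <| rpow_le_rpow (by positivity)
      (le_max_of_le_left (mul_half_norm_le_of_mem_ball hd hx (by positivity) n.cast_nonneg))
      (by positivity)
end

section
/- Let $n \ge 3$ and let $\lambda$ be a finite signed Borel measure on $\mathbb{R}^n$ supported in $B_{1/2}$ with total variation $|\lambda|(B_{1/2}) < \infty$. Define $v(x) = \int_{\mathbb{R}^n} |x-y|^{2-n} \, d\lambda(y)$. Then for every $\epsilon \in (0, 1/4)$ and every $\delta \in (0, \epsilon)$, there are constants $C_3, C_2 > 0$ depending only on $n$ such that $\frac{1}{\delta^2} \int_{B_\delta} |v(x)|\,dx \le C_3 |\lambda|(B_{2\epsilon}) + C_2 \frac{\delta^{n-2}}{\epsilon^{n-2}} |\lambda|(B_{1/2})$. In particular, if moreover $\lambda(\{0\}) = 0$, then $\lim_{\epsilon \to 0} \limsup_{\delta \to 0} \frac{1}{\delta^2}\int_{B_\delta}|v(x)|\,dx = 0$ in the sense that for every $\eta > 0$ there exist $\epsilon, \delta_0 > 0$ such that $\frac{1}{\delta^2}\int_{B_\delta}|v| \, dx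 < \eta$ for all $\delta < \delta_0$. -/
/-!
Bound `|v|` pointwise by the potential of `|λ|` and integrate over `B_δ` with Tonelli. For each
`y`, the kernel `‖x - y‖^{2-n}` integrates over `B_δ` to at most `(n/2 + 1) |B_1| δ²`: on
`B_δ(y)` the radial integral is exactly `n/2 |B_1| δ²`, and off it the kernel is at most
`δ^{2-n}`. If `|y| ≥ 2ε` with `δ ≤ ε`, the kernel is at most `ε^{2-n}` on `B_δ`. Splitting `|λ|`
over `B_{2ε}` and its complement gives the estimate; the limit statement follows since
`|λ|(B_{2ε}) → |λ|({0}) = 0`.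
-/

open MeasureTheory Metric Real Set Filter Topology Module
open scoped ENNReal

theorem setLIntegral_ball_comp_sub {G : Type*} [SeminormedAddCommGroup G] [MeasurableSpace G]
    [MeasurableAdd G] [OpensMeasurableSpace G] (μ : Measure G) [μ.IsAddRightInvariant]
    (f : G → ℝ≥0∞) (y : G) (r : ℝ) :
    ∫⁻ x in ball y r, f (x - y) ∂μ = ∫⁻ x in ball 0 r, f x ∂μ := by
  rw [← lintegral_indicator measurableSet_ball, ← lintegral_indicator measurableSet_ball,
    ← lintegral_sub_right_eq_self ((ball 0 r).indicator f) y]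
  congr with x
  simp [indicator, dist_eq_norm]

section HaarMeasure
variable {E : Type*} [NormedAddCommGroup E] [NormedSpace ℝ E] [FiniteDimensional ℝ E]
  [MeasurableSpace E] [BorelSpace E] [Nontrivial E] (μ : Measure E) [μ.IsAddHaarMeasure]

theorem setIntegral_ball_norm_rpow {s r : ℝ} (hs : -(finrank ℝ E : ℝ) < s) (hr : 0 ≤ r) :
    ∫ x in ball (0 : E) r, ‖x‖ ^ s ∂μ
      = finrank ℝ E / (s + finrank ℝ E) * μ.real (ball 0 1) * r ^ (s + finrank ℝ E) := by
  have hsd : 0 < s + finrank ℝ E := by linarith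
  have hradial :
      (ball (0 : E) r).indicator (‖·‖ ^ s) = fun x ↦ (Iio r).indicator (· ^ s) ‖x‖ := by
    ext x; simp [indicator]
  have hpow : ∫ y in Ioi (0 : ℝ), y ^ (finrank ℝ E - 1) • (Iio r).indicator (· ^ s) y
      = ∫ y in (0)..r, y ^ (s + finrank ℝ E - 1) := by
    rw [intervalIntegral.integral_of_le hr, integral_Ioc_eq_integral_Ioo, ← Ioi_inter_Iio,
      ← setIntegral_indicator measurableSet_Iio]
    refine setIntegral_congr_fun measurableSet_Ioi fun y (hy : 0 < y) ↦ ?_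
    by_cases hyr : y < r
    · simp [hyr, ← rpow_natCast, ← rpow_add hy, Nat.cast_sub Module.finrank_pos]
      ring_nf
    · simp [hyr]
  rw [← integral_indicator measurableSet_ball, hradial, integral_fun_norm_addHaar, hpow,
    integral_rpow (by left; linarith)]
  simp [zero_rpow hsd.ne']
  ring

theorem setLIntegral_ball_norm_rpow {s r : ℝ} (hs : -(finrank ℝ E : ℝ) < s) (hr : 0 ≤ r) :
    ∫⁻ x in ball (0 : E) r, ENNReal.ofReal (‖x‖ ^ s) ∂μ
      = ENNReal.ofReal (finrank ℝ E / (s + finrank ℝ E) * r ^ (s + finrank ℝ E))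
        * μ (ball 0 1) := by
  have hint : IntegrableOn (‖·‖ ^ s) (ball (0 : E) r) μ :=
    integrableOn_ball_of_norm_le_rpow Module.finrank_pos (C := 1) (α := -s) (by linarith)
      (.of_forall fun x ↦ by simp [abs_of_nonneg (rpow_nonneg (norm_nonneg x) s)])
      (measurable_norm.pow_const s).aestronglyMeasurable
  have hsd : 0 < s + finrank ℝ E := by linarith
  rw [← ofReal_integral_eq_lintegral_ofReal hint (.of_forall fun x ↦ by positivity),
    setIntegral_ball_norm_rpow μ hs hr, measureReal_def, mul_right_comm,
    ENNReal.ofReal_mul (by positivity), ENNReal.ofReal_toReal measure_ball_lt_top.ne]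

theorem setLIntegral_ball_norm_sub_rpow_le {s δ : ℝ} (hs : -(finrank ℝ E : ℝ) < s)
    (hs₀ : s ≤ 0) (hδ : 0 < δ) (y : E) :
    ∫⁻ x in ball (0 : E) δ, ENNReal.ofReal (‖x - y‖ ^ s) ∂μ
      ≤ ENNReal.ofReal ((finrank ℝ E / (s + finrank ℝ E) + 1) * δ ^ (s + finrank ℝ E))
        * μ (ball 0 1) := by
  have hsplit : ∀ x, ENNReal.ofReal (‖x - y‖ ^ s)
      ≤ (ball y δ).indicator (fun x ↦ ENNReal.ofReal (‖x - y‖ ^ s)) x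
        + ENNReal.ofReal (δ ^ s) := by
    intro x
    by_cases hx : x ∈ ball y δ
    · simp [hx]
    · rw [mem_ball, dist_eq_norm, not_lt] at hx
      simpa [indicator, mem_ball, dist_eq_norm, hx.not_gt]
        using ENNReal.ofReal_le_ofReal (rpow_le_rpow_of_nonpos hδ hx hs₀)
  calc ∫⁻ x in ball (0 : E) δ, ENNReal.ofReal (‖x - y‖ ^ s) ∂μ
      ≤ ∫⁻ x in ball (0 : E) δ,
          ((ball y δ).indicator (fun x ↦ ENNReal.ofReal (‖x - y‖ ^ s)) x
            + ENNReal.ofReal (δ ^ s)) ∂μ := lintegral_mono hsplit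
    _ ≤ ∫⁻ x, (ball y δ).indicator (fun x ↦ ENNReal.ofReal (‖x - y‖ ^ s)) x ∂μ
          + ENNReal.ofReal (δ ^ s) * μ (ball 0 δ) := by
      rw [lintegral_add_right _ measurable_const, setLIntegral_const]
      gcongr
      exact Measure.restrict_le_self
    _ = ENNReal.ofReal (finrank ℝ E / (s + finrank ℝ E) * δ ^ (s + finrank ℝ E))
            * μ (ball 0 1)
          + ENNReal.ofReal (δ ^ (s + finrank ℝ E)) * μ (ball 0 1) := by
      rw [lintegral_indicator measurableSet_ball,
        setLIntegral_ball_comp_sub μ (fun x ↦ ENNReal.ofReal (‖x‖ ^ s)),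
        setLIntegral_ball_norm_rpow μ hs hδ.le, μ.addHaar_ball _ hδ.le, ← mul_assoc,
        ← ENNReal.ofReal_mul (rpow_nonneg hδ.le s), ← rpow_natCast, ← rpow_add hδ]
    _ = _ := by
      have hsd : 0 < s + finrank ℝ E := by linarith
      rw [← add_mul, ← ENNReal.ofReal_add (by positivity) (rpow_nonneg hδ.le _), add_one_mul]

theorem setLIntegral_ball_norm_sub_rpow_le_of_le_norm {s δ ε : ℝ} (hs₀ : s ≤ 0)
    (hδ : 0 < δ) (hδε : δ ≤ ε) {y : E} (hy : 2 * ε ≤ ‖y‖) :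
    ∫⁻ x in ball (0 : E) δ, ENNReal.ofReal (‖x - y‖ ^ s) ∂μ
      ≤ ENNReal.ofReal (ε ^ s * δ ^ finrank ℝ E) * μ (ball 0 1) := by
  have hfar : ∀ x ∈ ball (0 : E) δ, ENNReal.ofReal (‖x - y‖ ^ s) ≤ ENNReal.ofReal (ε ^ s) := by
    intro x hx
    rw [mem_ball_zero_iff] at hx
    have : ε ≤ ‖x - y‖ := by
      linarith [norm_sub_norm_le y x, norm_sub_rev x y]
    exact ENNReal.ofReal_le_ofReal (rpow_le_rpow_of_nonpos (by linarith) this hs₀)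
  calc ∫⁻ x in ball (0 : E) δ, ENNReal.ofReal (‖x - y‖ ^ s) ∂μ
      ≤ ∫⁻ _ in ball (0 : E) δ, ENNReal.ofReal (ε ^ s) ∂μ :=
        setLIntegral_mono measurable_const hfar
    _ = _ := by
      rw [setLIntegral_const, μ.addHaar_ball _ hδ.le, ← mul_assoc,
        ← ENNReal.ofReal_mul (rpow_nonneg (hδ.trans_le hδε).le s)]

theorem setLIntegral_ball_lintegral_norm_sub_rpow_le (ν : Measure E) [SFinite ν]
    {s δ ε : ℝ} (hs : -(finrank ℝ E : ℝ) < s) (hs₀ : s ≤ 0) (hδ : 0 < δ) (hδε : δ ≤ ε) :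
    ∫⁻ x in ball (0 : E) δ, ∫⁻ y, ENNReal.ofReal (‖x - y‖ ^ s) ∂ν ∂μ
      ≤ ENNReal.ofReal ((finrank ℝ E / (s + finrank ℝ E) + 1) * δ ^ (s + finrank ℝ E))
          * μ (ball 0 1) * ν (ball 0 (2 * ε))
        + ENNReal.ofReal (ε ^ s * δ ^ finrank ℝ E) * μ (ball 0 1) * ν (ball 0 (2 * ε))ᶜ := by
  have hK : Measurable fun p : E × E ↦ ENNReal.ofReal (‖p.1 - p.2‖ ^ s) := by fun_prop
  calc ∫⁻ x in ball (0 : E) δ, ∫⁻ y, ENNReal.ofReal (‖x - y‖ ^ s) ∂ν ∂μ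
      = ∫⁻ y, ∫⁻ x in ball (0 : E) δ, ENNReal.ofReal (‖x - y‖ ^ s) ∂μ ∂ν :=
        lintegral_lintegral_swap hK.aemeasurable
    _ = (∫⁻ y in ball 0 (2 * ε), ∫⁻ x in ball (0 : E) δ, ENNReal.ofReal (‖x - y‖ ^ s) ∂μ ∂ν)
        + ∫⁻ y in (ball 0 (2 * ε))ᶜ,
            ∫⁻ x in ball (0 : E) δ, ENNReal.ofReal (‖x - y‖ ^ s) ∂μ ∂ν :=
        (lintegral_add_compl _ measurableSet_ball).symm
    _ ≤ (∫⁻ _ in ball 0 (2 * ε), ENNReal.ofReal ((finrank ℝ E / (s + finrank ℝ E) + 1)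
            * δ ^ (s + finrank ℝ E)) * μ (ball 0 1) ∂ν)
        + ∫⁻ _ in (ball 0 (2 * ε))ᶜ,
            ENNReal.ofReal (ε ^ s * δ ^ finrank ℝ E) * μ (ball 0 1) ∂ν := by
      refine add_le_add (setLIntegral_mono measurable_const fun y _ ↦ ?_)
        (setLIntegral_mono measurable_const fun y hy ↦ ?_)
      · exact setLIntegral_ball_norm_sub_rpow_le μ hs hs₀ hδ y
      · rw [mem_compl_iff, mem_ball_zero_iff, not_lt] at hy
        exact setLIntegral_ball_norm_sub_rpow_le_of_le_norm μ hs₀ hδ hδε hy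
    _ = _ := by rw [setLIntegral_const, setLIntegral_const]

end HaarMeasure

theorem SignedMeasure.enorm_integral_posPart_sub_integral_negPart_le {X G : Type*}
    [MeasurableSpace X] [NormedAddCommGroup G] [NormedSpace ℝ G] (lam : SignedMeasure X)
    (f : X → G) :
    ‖∫ x, f x ∂lam.toJordanDecomposition.posPart - ∫ x, f x ∂lam.toJordanDecomposition.negPart‖ₑ
      ≤ ∫⁻ x, ‖f x‖ₑ ∂lam.totalVariation := by
  rw [SignedMeasure.totalVariation, lintegral_add_measure]
  exact enorm_sub_le.trans
    (add_le_add (enorm_integral_le_lintegral_enorm _) (enorm_integral_le_lintegral_enorm _))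

theorem newtonianPotential_lintegral_ball_le {n : ℕ} (hn : 3 ≤ n)
    {lam : SignedMeasure (EuclideanSpace ℝ (Fin n))}
    (hsupp : lam.totalVariation (ball (0 : EuclideanSpace ℝ (Fin n)) (1/2))ᶜ = 0)
    {v : EuclideanSpace ℝ (Fin n) → ℝ}
    (hv : ∀ x, v x =
      (∫ y, ‖x - y‖ ^ ((2:ℝ) - (n:ℝ)) ∂lam.toJordanDecomposition.posPart)
      - ∫ y, ‖x - y‖ ^ ((2:ℝ) - (n:ℝ)) ∂lam.toJordanDecomposition.negPart)
    {ε δ : ℝ} (hδ : 0 < δ) (hδε : δ ≤ ε) :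
    ∫⁻ x in ball (0 : EuclideanSpace ℝ (Fin n)) δ, ENNReal.ofReal |v x|
      ≤ ENNReal.ofReal ((n / 2 + 1) * δ ^ 2) * volume (ball (0 : EuclideanSpace ℝ (Fin n)) 1)
          * lam.totalVariation (ball 0 (2 * ε))
        + ENNReal.ofReal (ε ^ ((2:ℝ) - n) * δ ^ n)
          * volume (ball (0 : EuclideanSpace ℝ (Fin n)) 1) * lam.totalVariation (ball 0 (1/2)) := by
  have : Nontrivial (EuclideanSpace ℝ (Fin n)) :=
    Module.nontrivial_of_finrank_pos (R := ℝ) (by rw [finrank_euclideanSpace_fin]; omega)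
  have hn' : (3 : ℝ) ≤ n := by exact_mod_cast hn
  have hpot : ∀ x, ENNReal.ofReal |v x|
      ≤ ∫⁻ y, ENNReal.ofReal (‖x - y‖ ^ ((2:ℝ) - n)) ∂lam.totalVariation := fun x ↦ by
    rw [hv x, ← Real.enorm_eq_ofReal_abs]
    exact (SignedMeasure.enorm_integral_posPart_sub_integral_negPart_le lam _).trans_eq
      (lintegral_congr fun y ↦ Real.enorm_of_nonneg (by positivity))
  have hfar : lam.totalVariation (ball (0 : EuclideanSpace ℝ (Fin n)) (2 * ε))ᶜ
      ≤ lam.totalVariation (ball 0 (1/2)) :=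
    measure_mono_ae (ae_le_set.mpr (measure_mono_null (fun x hx ↦ hx.2) hsupp))
  have hkernel := setLIntegral_ball_lintegral_norm_sub_rpow_le volume lam.totalVariation
    (s := 2 - n) (by simp) (by linarith) hδ hδε
  simp only [finrank_euclideanSpace_fin, sub_add_cancel] at hkernel
  calc _ ≤ _ := lintegral_mono hpot
    _ ≤ _ := hkernel
    _ ≤ _ := by rw [rpow_two]; gcongr

theorem newtonianPotential_ball_average_le {n : ℕ} (hn : 3 ≤ n)
    {lam : SignedMeasure (EuclideanSpace ℝ (Fin n))}
    (hsupp : lam.totalVariation (ball (0 : EuclideanSpace ℝ (Fin n)) (1/2))ᶜ = 0)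
    {v : EuclideanSpace ℝ (Fin n) → ℝ}
    (hv : ∀ x, v x =
      (∫ y, ‖x - y‖ ^ ((2:ℝ) - (n:ℝ)) ∂lam.toJordanDecomposition.posPart)
      - ∫ y, ‖x - y‖ ^ ((2:ℝ) - (n:ℝ)) ∂lam.toJordanDecomposition.negPart)
    {ε δ : ℝ} (hδ : 0 < δ) (hδε : δ ≤ ε) :
    (1 / δ ^ 2) * ∫ x in ball (0 : EuclideanSpace ℝ (Fin n)) δ, |v x|
      ≤ ((n / 2 + 1) * volume.real (ball (0 : EuclideanSpace ℝ (Fin n)) 1))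
          * (lam.totalVariation (ball (0 : EuclideanSpace ℝ (Fin n)) (2 * ε))).toReal
        + volume.real (ball (0 : EuclideanSpace ℝ (Fin n)) 1)
          * (δ ^ ((n:ℝ) - 2) / ε ^ ((n:ℝ) - 2))
          * (lam.totalVariation (ball (0 : EuclideanSpace ℝ (Fin n)) (1/2))).toReal := by
  have hε : 0 < ε := hδ.trans_le hδε
  have hint : ∫ x in ball (0 : EuclideanSpace ℝ (Fin n)) δ, |v x|
      ≤ (n / 2 + 1) * δ ^ 2 * volume.real (ball (0 : EuclideanSpace ℝ (Fin n)) 1)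
          * (lam.totalVariation (ball 0 (2 * ε))).toReal
        + ε ^ ((2:ℝ) - n) * δ ^ n * volume.real (ball (0 : EuclideanSpace ℝ (Fin n)) 1)
          * (lam.totalVariation (ball 0 (1/2))).toReal := by
    refine (Real.le_norm_self _).trans ((norm_integral_le_lintegral_norm _).trans ?_)
    simp only [Real.norm_eq_abs, abs_abs]
    refine (ENNReal.toReal_mono (by finiteness)
      (newtonianPotential_lintegral_ball_le hn hsupp hv hδ hδε)).trans_eq ?_
    rw [ENNReal.toReal_add (by finiteness) (by finiteness)]
    simp only [ENNReal.toReal_mul, measureReal_def]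
    rw [ENNReal.toReal_ofReal (by positivity), ENNReal.toReal_ofReal (by positivity)]
  calc (1 / δ ^ 2) * ∫ x in ball (0 : EuclideanSpace ℝ (Fin n)) δ, |v x|
      ≤ (1 / δ ^ 2) * ((n / 2 + 1) * δ ^ 2 * volume.real (ball (0 : EuclideanSpace ℝ (Fin n)) 1)
          * (lam.totalVariation (ball 0 (2 * ε))).toReal
        + ε ^ ((2:ℝ) - n) * δ ^ n * volume.real (ball (0 : EuclideanSpace ℝ (Fin n)) 1)
          * (lam.totalVariation (ball 0 (1/2))).toReal) := by gcongr
    _ = _ := by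
      simp only [rpow_sub hε, rpow_sub hδ, rpow_two, rpow_natCast]
      field_simp

theorem tendsto_measure_ball_nhdsGT_zero {X : Type*} [MetricSpace X] [MeasurableSpace X]
    [OpensMeasurableSpace X] (μ : Measure X) [IsFiniteMeasure μ] (x : X) :
    Tendsto (fun r ↦ μ (ball x r)) (𝓝[>] 0) (𝓝 (μ {x})) := by
  simpa [thickening_singleton] using
    tendsto_measure_thickening_of_isClosed (μ := μ) ⟨1, one_pos, measure_ne_top _ _⟩
      (isClosed_singleton (x := x))

theorem exists_pos_forall_lt_of_le_add {F a : ℝ → ℝ} {g : ℝ → ℝ → ℝ} {r η : ℝ}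
    (hr : 0 < r) (hη : 0 < η) (ha : Tendsto a (𝓝[>] 0) (𝓝 0))
    (hg : ∀ ε, Tendsto (g ε) (𝓝[>] 0) (𝓝 0))
    (hF : ∀ ε ∈ Ioo 0 r, ∀ δ ∈ Ioo 0 ε, F δ ≤ a ε + g ε δ) :
    ∃ δ₀ : ℝ, 0 < δ₀ ∧ ∀ δ : ℝ, 0 < δ → δ < δ₀ → F δ < η := by
  obtain ⟨ε, hεa, hε⟩ : ∃ ε, a ε < η / 2 ∧ ε ∈ Ioo 0 r :=
    ((ha.eventually (gt_mem_nhds (half_pos hη))).and (Ioo_mem_nhdsGT hr)).exists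
  obtain ⟨δ₀, hδ₀, hsub⟩ := mem_nhdsGT_iff_exists_Ioo_subset.mp
    (((hg ε).eventually (gt_mem_nhds (half_pos hη))).and (Ioo_mem_nhdsGT hε.1))
  refine ⟨δ₀, hδ₀, fun δ hδ hδδ₀ ↦ ?_⟩
  obtain ⟨hgδ, hδε⟩ := hsub ⟨hδ, hδδ₀⟩
  linarith [hF ε hε δ hδε]

/-- Estimate for the Newtonian potential of a finite signed measure `λ` supported in `B_{1/2}`:
`δ^{-2}∫_{B_δ}|v| ≤ C₃|λ|(B_{2ε}) + C₂ (δ/ε)^{n-2}|λ|(B_{1/2})`, and if `λ({0}) = 0` the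
averages `δ^{-2}∫_{B_δ}|v|` tend to `0`. -/
theorem newtonian_potential_small_ball_average
    (n : ℕ) (hn : 3 ≤ n)
    (lam : SignedMeasure (EuclideanSpace ℝ (Fin n)))
    (hsupp : lam.totalVariation (ball (0 : EuclideanSpace ℝ (Fin n)) (1/2))ᶜ = 0)
    (v : EuclideanSpace ℝ (Fin n) → ℝ)
    (hv : ∀ x, v x =
      (∫ y, ‖x - y‖ ^ ((2:ℝ) - (n:ℝ)) ∂lam.toJordanDecomposition.posPart)
      - ∫ y, ‖x - y‖ ^ ((2:ℝ) - (n:ℝ)) ∂lam.toJordanDecomposition.negPart) :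
    ∃ C3 : ℝ, 0 < C3 ∧ ∃ C2 : ℝ, 0 < C2 ∧
      ((∀ ε ∈ Set.Ioo (0:ℝ) (1/4), ∀ δ ∈ Set.Ioo (0:ℝ) ε,
        (1 / δ ^ 2) * ∫ x in ball (0 : EuclideanSpace ℝ (Fin n)) δ, |v x|
          ≤ C3 * (lam.totalVariation (ball (0 : EuclideanSpace ℝ (Fin n)) (2*ε))).toReal
            + C2 * (δ ^ ((n:ℝ) - 2) / ε ^ ((n:ℝ) - 2))
              * (lam.totalVariation (ball (0 : EuclideanSpace ℝ (Fin n)) (1/2))).toReal) ∧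
      (lam.totalVariation {0} = 0 →
        ∀ η : ℝ, 0 < η → ∃ δ0 : ℝ, 0 < δ0 ∧ ∀ δ : ℝ, 0 < δ → δ < δ0 →
          (1 / δ ^ 2) * ∫ x in ball (0 : EuclideanSpace ℝ (Fin n)) δ, |v x| < η)) := by
  set c := volume.real (ball (0 : EuclideanSpace ℝ (Fin n)) 1)
  have hc : 0 < c :=
    ENNReal.toReal_pos (measure_ball_pos _ _ one_pos).ne' measure_ball_lt_top.ne
  have hbound : ∀ ε ∈ Ioo (0:ℝ) (1/4), ∀ δ ∈ Ioo 0 ε, _ :=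
    fun ε _ δ hδ ↦ newtonianPotential_ball_average_le hn hsupp hv hδ.1 hδ.2.le
  refine ⟨(n / 2 + 1) * c, by positivity, c, hc, hbound, fun hatom η hη ↦
    exists_pos_forall_lt_of_le_add (by norm_num) hη ?_ (fun ε ↦ ?_) hbound⟩
  · have hball := tendsto_measure_ball_nhdsGT_zero lam.totalVariation 0
    rw [hatom] at hball
    have hdouble : Tendsto (2 * ·) (𝓝[>] (0:ℝ)) (𝓝[>] 0) := by
      have h := tendsto_comap (f := fun ε : ℝ ↦ 2 * ε) (x := 𝓝[>] 0)
      rwa [comap_mulLeft_nhdsGT_zero (by norm_num : (0:ℝ) < 2)] at h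
    simpa using ((ENNReal.tendsto_toReal ENNReal.zero_ne_top).comp
      (hball.comp hdouble)).const_mul ((n / 2 + 1) * c)
  · have hpow : Tendsto (fun δ : ℝ ↦ δ ^ ((n:ℝ) - 2)) (𝓝[>] 0) (𝓝 0) := by
      have hn' : (0:ℝ) < n - 2 := by
        have : (3:ℝ) ≤ n := by exact_mod_cast hn
        linarith
      simpa [zero_rpow hn'.ne'] using
        ((continuous_rpow_const hn'.le).tendsto 0).mono_left nhdsWithin_le_nhds
    simpa using ((hpow.div_const _).const_mul c).mul_const
      (lam.totalVariation (ball (0 : EuclideanSpace ℝ (Fin n)) (1/2))).toReal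
end

section
/- Let $n \ge 1$, $s \in (0,1)$, and let $g \in C^2(\mathbb{R}^n)$ be bounded with bounded first and second derivatives, and suppose $g$ is supported in $B_\epsilon$ for some $\epsilon \in (0,1)$, with $\|\nabla g\|_{L^\infty} \le C_0 \epsilon$ and $\|D^2 g\|_{L^\infty} \le C_0$. Then there is a constant $C = C(n,s,C_0)$ such that for all $x \in \mathbb{R}^n$ with $|x| \le 2$: $|(-\Delta)^s g(x)| \le C(\epsilon^{2s} + \epsilon^{2-2s})$. -/
/-!
Taylor's formula bounds the second difference `2 g x - g (x + y) - g (x - y)` by `2 C₀ ‖y‖²`.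
Since `g` is `C₀ ε`-Lipschitz and vanishes outside `B_ε`, also `|g| ≤ 3 C₀ ε²`, so the second
difference is `O(C₀ min (‖y‖², ε²))`. In polar coordinates the kernel bound integrates to
`∫₀^∞ min (r², ε²) r^(-1-2s) dr = ε^(2-2s) / (2 s (1 - s))`, the inner part `r < ε` giving
`ε^(2-2s) / (2 - 2s)` and the outer part `ε^(2-2s) / (2s)`.
-/

open MeasureTheory Metric Real Set Module

section OneDim

variable {s ε : ℝ}

theorem min_sq_mul_rpow_eqOn_Ioc :
    EqOn (fun r : ℝ => min (r ^ 2) (ε ^ 2) * r ^ (-1 - 2 * s)) (fun r => r ^ (1 - 2 * s))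
      (Ioc 0 ε) := by
  intro r ⟨hr0, hrε⟩
  have hsq : r ^ 2 ≤ ε ^ 2 := pow_le_pow_left₀ hr0.le hrε 2
  dsimp only
  rw [min_eq_left hsq, ← rpow_natCast, ← rpow_add hr0]
  norm_num [show (2:ℝ) + (-1 - 2 * s) = 1 - 2 * s by ring]

theorem min_sq_mul_rpow_eqOn_Ioi (hε : 0 < ε) :
    EqOn (fun r : ℝ => min (r ^ 2) (ε ^ 2) * r ^ (-1 - 2 * s)) (fun r => ε ^ 2 * r ^ (-1 - 2 * s))
      (Ioi ε) := by
  intro r hr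
  have hsq : ε ^ 2 ≤ r ^ 2 := pow_le_pow_left₀ hε.le hr.le 2
  simp only [min_eq_right hsq]

theorem integrableOn_Ioi_min_sq_mul_rpow (hs0 : 0 < s) (hs1 : s < 1) (hε : 0 < ε) :
    IntegrableOn (fun r : ℝ => min (r ^ 2) (ε ^ 2) * r ^ (-1 - 2 * s)) (Ioi 0) := by
  rw [← Ioc_union_Ioi_eq_Ioi hε.le]
  refine IntegrableOn.union ?_ ?_
  · refine (integrableOn_congr_fun min_sq_mul_rpow_eqOn_Ioc measurableSet_Ioc).2 ?_
    exact (intervalIntegrable_iff_integrableOn_Ioc_of_le hε.le).1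
      (intervalIntegral.intervalIntegrable_rpow' (by linarith))
  · refine (integrableOn_congr_fun (min_sq_mul_rpow_eqOn_Ioi hε) measurableSet_Ioi).2 ?_
    exact (integrableOn_Ioi_rpow_of_lt (by linarith) hε).const_mul _

theorem integral_Ioi_min_sq_mul_rpow (hs0 : 0 < s) (hs1 : s < 1) (hε : 0 < ε) :
    ∫ r in Ioi 0, min (r ^ 2) (ε ^ 2) * r ^ (-1 - 2 * s) = ε ^ (2 - 2 * s) / (2 * s * (1 - s)) := by
  have hint := integrableOn_Ioi_min_sq_mul_rpow hs0 hs1 hε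
  rw [← Ioc_union_Ioi_eq_Ioi hε.le] at hint ⊢
  rw [setIntegral_union (Ioc_disjoint_Ioi le_rfl) measurableSet_Ioi
      (hint.mono_set subset_union_left) (hint.mono_set subset_union_right),
    setIntegral_congr_fun measurableSet_Ioc min_sq_mul_rpow_eqOn_Ioc,
    setIntegral_congr_fun measurableSet_Ioi (min_sq_mul_rpow_eqOn_Ioi hε),
    ← intervalIntegral.integral_of_le hε.le, integral_rpow (Or.inl (by linarith)),
    integral_const_mul, integral_Ioi_rpow_of_lt (by linarith) hε,
    zero_rpow (by linarith), show -1 - 2 * s + 1 = -(2 * s) by ring, neg_div_neg_eq,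
    ← mul_div_assoc, ← rpow_natCast, ← rpow_add hε, show 1 - 2 * s + 1 = 2 - 2 * s by ring]
  have h1 : 1 - s ≠ 0 := by linarith
  have h2 : s ≠ 0 := by linarith
  norm_num [show (2:ℝ) + -(2 * s) = 2 - 2 * s by ring]
  field_simp
  ring

end OneDim

section SecondDifference

variable {E : Type*} [NormedAddCommGroup E] [NormedSpace ℝ E] {g : E → ℝ}

theorem abs_two_mul_sub_sub_le_of_norm_fderiv_fderiv_le {M : ℝ} (hg : Differentiable ℝ g)
    (hg' : Differentiable ℝ (fderiv ℝ g)) (h2 : ∀ z, ‖fderiv ℝ (fderiv ℝ g) z‖ ≤ M) (x y : E) :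
    |2 * g x - g (x + y) - g (x - y)| ≤ 2 * M * ‖y‖ ^ 2 := by
  have hball : ∀ z ∈ closedBall x ‖y‖, ‖fderiv ℝ g z - fderiv ℝ g x‖ ≤ M * ‖y‖ := fun z hz =>
    calc ‖fderiv ℝ g z - fderiv ℝ g x‖ ≤ M * ‖z - x‖ :=
          convex_univ.norm_image_sub_le_of_norm_fderiv_le (fun w _ => hg' w) (fun w _ => h2 w)
            (mem_univ x) (mem_univ z)
      _ ≤ M * ‖y‖ := by
          gcongr
          · exact (norm_nonneg (fderiv ℝ (fderiv ℝ g) x)).trans (h2 x)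
          · rwa [← dist_eq_norm, ← mem_closedBall]
  have taylor : ∀ v : E, ‖v‖ = ‖y‖ → ‖g (x + v) - g x - fderiv ℝ g x v‖ ≤ M * ‖y‖ * ‖y‖ :=
    fun v hv => by
      simpa [hv] using (convex_closedBall x ‖y‖).norm_image_sub_le_of_norm_fderiv_le'
        (fun z _ => hg z) hball (mem_closedBall_self (norm_nonneg y))
        (by simp [mem_closedBall, dist_eq_norm, hv] : x + v ∈ closedBall x ‖y‖)
  have hsum := norm_add_le_of_le (taylor y rfl) (taylor (-y) (norm_neg y))
  rw [← Real.norm_eq_abs]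
  calc ‖2 * g x - g (x + y) - g (x - y)‖
      = ‖(g (x + y) - g x - fderiv ℝ g x y) + (g (x + -y) - g x - fderiv ℝ g x (-y))‖ := by
        rw [← norm_neg, map_neg, ← sub_eq_add_neg]; ring_nf
    _ ≤ M * ‖y‖ * ‖y‖ + M * ‖y‖ * ‖y‖ := hsum
    _ = 2 * M * ‖y‖ ^ 2 := by ring

theorem abs_le_of_tsupport_subset_closedBall [Nontrivial E] {L ε : ℝ} (hg : Differentiable ℝ g)
    (h1 : ∀ z, ‖fderiv ℝ g z‖ ≤ L) (hsupp : tsupport g ⊆ closedBall 0 ε) (hε : 0 < ε) (z : E) :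
    |g z| ≤ 3 * L * ε := by
  have hL : 0 ≤ L := (norm_nonneg (fderiv ℝ g 0)).trans (h1 0)
  have hzero : ∀ w, ε < ‖w‖ → g w = 0 := fun w hw =>
    image_eq_zero_of_notMem_tsupport fun hmem =>
      hw.not_ge (mem_closedBall_zero_iff.1 (hsupp hmem))
  by_cases hz : ε < ‖z‖
  · rw [hzero z hz, abs_zero]; positivity
  obtain ⟨w, hw⟩ := exists_norm_eq E (by positivity : 0 ≤ 2 * ε)
  calc |g z| = ‖g z - g w‖ := by rw [hzero w (by linarith), sub_zero, Real.norm_eq_abs]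
    _ ≤ L * ‖z - w‖ :=
        convex_univ.norm_image_sub_le_of_norm_fderiv_le (fun v _ => hg v) (fun v _ => h1 v)
          (mem_univ w) (mem_univ z)
    _ ≤ L * (ε + 2 * ε) := by
        gcongr
        exact (norm_sub_le z w).trans (by rw [hw]; linarith)
    _ = 3 * L * ε := by ring

theorem abs_two_mul_sub_sub_le_min [Nontrivial E] {ε C₀ : ℝ} (hg : ContDiff ℝ 2 g)
    (hsupp : tsupport g ⊆ closedBall 0 ε) (hε : 0 < ε) (h1 : ∀ z, ‖fderiv ℝ g z‖ ≤ C₀ * ε)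
    (h2 : ∀ z, ‖fderiv ℝ (fderiv ℝ g) z‖ ≤ C₀) (x y : E) :
    |2 * g x - g (x + y) - g (x - y)| ≤ 12 * C₀ * min (‖y‖ ^ 2) (ε ^ 2) := by
  have hC₀ : 0 ≤ C₀ := (norm_nonneg (fderiv ℝ (fderiv ℝ g) 0)).trans (h2 0)
  have hgd : Differentiable ℝ g := hg.differentiable two_ne_zero
  have hbdd := abs_le_of_tsupport_subset_closedBall hgd h1 hsupp hε
  rw [mul_min_of_nonneg _ _ (by positivity)]
  refine le_min ?_ ?_
  · calc |2 * g x - g (x + y) - g (x - y)| ≤ 2 * C₀ * ‖y‖ ^ 2 :=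
          abs_two_mul_sub_sub_le_of_norm_fderiv_fderiv_le hgd
            ((hg.fderiv_right (m := 1) le_rfl).differentiable one_ne_zero) h2 x y
      _ ≤ 12 * C₀ * ‖y‖ ^ 2 := by gcongr; norm_num
  · obtain ⟨h0l, h0r⟩ := abs_le.1 (hbdd x)
    obtain ⟨h1l, h1r⟩ := abs_le.1 (hbdd (x + y))
    obtain ⟨h2l, h2r⟩ := abs_le.1 (hbdd (x - y))
    exact abs_le.2 ⟨by linarith, by linarith⟩

end SecondDifference

section Radial

variable {E : Type*} [NormedAddCommGroup E] [NormedSpace ℝ E] [FiniteDimensional ℝ E]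
  [Nontrivial E] {s ε : ℝ}

theorem pow_finrank_sub_one_smul_eqOn (s ε : ℝ) :
    EqOn (fun r : ℝ => r ^ (finrank ℝ E - 1) •
        (min (r ^ 2) (ε ^ 2) * r ^ (-((finrank ℝ E : ℝ) + 2 * s))))
      (fun r => min (r ^ 2) (ε ^ 2) * r ^ (-1 - 2 * s)) (Ioi 0) := by
  intro r (hr : 0 < r)
  have hd : ((finrank ℝ E - 1 : ℕ) : ℝ) = finrank ℝ E - 1 := by
    rw [Nat.cast_sub finrank_pos, Nat.cast_one]
  dsimp only
  rw [smul_eq_mul, mul_left_comm, ← rpow_natCast r (finrank ℝ E - 1), ← rpow_add hr, hd]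
  ring_nf

variable [MeasurableSpace E] [BorelSpace E] (μ : Measure E) [μ.IsAddHaarMeasure]

theorem integrable_min_sq_mul_norm_rpow (hs0 : 0 < s) (hs1 : s < 1) (hε : 0 < ε) :
    Integrable (fun y : E => min (‖y‖ ^ 2) (ε ^ 2) * ‖y‖ ^ (-((finrank ℝ E : ℝ) + 2 * s))) μ :=
  (integrable_fun_norm_addHaar μ (f := fun r => min (r ^ 2) (ε ^ 2) *
      r ^ (-((finrank ℝ E : ℝ) + 2 * s)))).2 <|
    (integrableOn_congr_fun (pow_finrank_sub_one_smul_eqOn s ε) measurableSet_Ioi).2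
      (integrableOn_Ioi_min_sq_mul_rpow hs0 hs1 hε)

theorem integral_min_sq_mul_norm_rpow (hs0 : 0 < s) (hs1 : s < 1) (hε : 0 < ε) :
    ∫ y, min (‖y‖ ^ 2) (ε ^ 2) * ‖y‖ ^ (-((finrank ℝ E : ℝ) + 2 * s)) ∂μ =
      finrank ℝ E * μ.real (ball 0 1) * (ε ^ (2 - 2 * s) / (2 * s * (1 - s))) := by
  rw [integral_fun_norm_addHaar μ (fun r => min (r ^ 2) (ε ^ 2) *
      r ^ (-((finrank ℝ E : ℝ) + 2 * s))),
    setIntegral_congr_fun measurableSet_Ioi (pow_finrank_sub_one_smul_eqOn s ε),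
    integral_Ioi_min_sq_mul_rpow hs0 hs1 hε, nsmul_eq_mul, smul_eq_mul, ← mul_assoc]

theorem abs_integral_two_mul_sub_sub_div_rpow_le {g : E → ℝ} {C₀ : ℝ} (hs0 : 0 < s)
    (hs1 : s < 1) (hε : 0 < ε) (hg : ContDiff ℝ 2 g) (hsupp : tsupport g ⊆ closedBall 0 ε)
    (h1 : ∀ z, ‖fderiv ℝ g z‖ ≤ C₀ * ε) (h2 : ∀ z, ‖fderiv ℝ (fderiv ℝ g) z‖ ≤ C₀) (x : E) :
    |∫ y, (2 * g x - g (x + y) - g (x - y)) / ‖y‖ ^ ((finrank ℝ E : ℝ) + 2 * s) ∂μ| ≤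
      12 * C₀ * finrank ℝ E * μ.real (ball 0 1) / (2 * s * (1 - s)) * ε ^ (2 - 2 * s) := by
  rw [← Real.norm_eq_abs]
  calc ‖∫ y, (2 * g x - g (x + y) - g (x - y)) / ‖y‖ ^ ((finrank ℝ E : ℝ) + 2 * s) ∂μ‖
      ≤ ∫ y, 12 * C₀ * (min (‖y‖ ^ 2) (ε ^ 2) * ‖y‖ ^ (-((finrank ℝ E : ℝ) + 2 * s))) ∂μ := by
        refine norm_integral_le_of_norm_le
          ((integrable_min_sq_mul_norm_rpow μ hs0 hs1 hε).const_mul _) (.of_forall fun y => ?_)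
        rw [Real.norm_eq_abs, abs_div, abs_of_nonneg (rpow_nonneg (norm_nonneg y) _),
          rpow_neg (norm_nonneg y), ← mul_assoc, ← div_eq_mul_inv]
        exact div_le_div_of_nonneg_right (abs_two_mul_sub_sub_le_min hg hsupp hε h1 h2 x y)
          (by positivity)
    _ = _ := by
        rw [integral_const_mul, integral_min_sq_mul_norm_rpow μ hs0 hs1 hε]
        ring

end Radial

theorem fracLap_small_support_bound_general
    (n : ℕ) (hn : 1 ≤ n) (s : ℝ) (hs : s ∈ Set.Ioo (0:ℝ) 1)
    (Cns : ℝ) (C0 : ℝ) (hC0 : 0 < C0) :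
    ∃ C : ℝ, 0 < C ∧
      ∀ ε ∈ Set.Ioo (0:ℝ) 1, ∀ g : EuclideanSpace ℝ (Fin n) → ℝ,
        ContDiff ℝ 2 g →
        tsupport g ⊆ closedBall (0 : EuclideanSpace ℝ (Fin n)) ε →
        (∀ x, ‖fderiv ℝ g x‖ ≤ C0 * ε) →
        (∀ x, ‖fderiv ℝ (fderiv ℝ g) x‖ ≤ C0) →
        ∀ x : EuclideanSpace ℝ (Fin n), ‖x‖ ≤ 2 →
          |(Cns / 2) * ∫ y, (2 * g x - g (x + y) - g (x - y)) / ‖y‖ ^ ((n:ℝ) + 2*s)|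
            ≤ C * (ε ^ (2*s) + ε ^ (2 - 2*s)) := by
  obtain ⟨hs0, hs1⟩ := hs
  have : Nonempty (Fin n) := ⟨⟨0, hn⟩⟩
  set K := 12 * C0 * n * (volume : Measure (EuclideanSpace ℝ (Fin n))).real (ball 0 1) /
    (2 * s * (1 - s))
  have hK : 0 ≤ |Cns| / 2 * K := by
    have : 0 < 1 - s := by linarith
    have : 0 ≤ (volume : Measure (EuclideanSpace ℝ (Fin n))).real (ball 0 1) := measureReal_nonneg
    positivity
  refine ⟨|Cns| / 2 * K + 1, by positivity, ?_⟩
  rintro ε ⟨hε, -⟩ g hg hsupp h1 h2 x -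
  have hI := abs_integral_two_mul_sub_sub_div_rpow_le volume hs0 hs1 hε hg hsupp h1 h2 x
  rw [finrank_euclideanSpace_fin] at hI
  have hε2s : 0 ≤ ε ^ (2 * s) := by positivity
  rw [abs_mul, abs_div, abs_two]
  calc |Cns| / 2 * |∫ y, (2 * g x - g (x + y) - g (x - y)) / ‖y‖ ^ ((n:ℝ) + 2*s)|
      ≤ |Cns| / 2 * K * ε ^ (2 - 2 * s) := by rw [mul_assoc]; gcongr
    _ ≤ (|Cns| / 2 * K + 1) * (ε ^ (2*s) + ε ^ (2 - 2*s)) := by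
        nlinarith [mul_nonneg hK hε2s, rpow_nonneg hε.le (2 - 2 * s)]

/-- If `g ∈ C²` is supported in `B_ε` with `‖∇g‖_∞ ≤ C₀ ε` and `‖D²g‖_∞ ≤ C₀`, then for
`|x| ≤ 2` one has `|(-Δ)^s g(x)| ≤ C (ε^{2s} + ε^{2-2s})` with `C = C(n,s,C₀)`.
The fractional Laplacian is written via the symmetric second-difference formula. -/
theorem fracLap_small_support_bound
    (n : ℕ) (hn : 1 ≤ n) (s : ℝ) (hs : s ∈ Set.Ioo (0:ℝ) 1)
    (Cns : ℝ) (hCns : 0 < Cns) (C0 : ℝ) (hC0 : 0 < C0) :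
    ∃ C : ℝ, 0 < C ∧
      ∀ ε ∈ Set.Ioo (0:ℝ) 1, ∀ g : EuclideanSpace ℝ (Fin n) → ℝ,
        ContDiff ℝ 2 g →
        tsupport g ⊆ closedBall (0 : EuclideanSpace ℝ (Fin n)) ε →
        (∀ x, ‖fderiv ℝ g x‖ ≤ C0 * ε) →
        (∀ x, ‖fderiv ℝ (fderiv ℝ g) x‖ ≤ C0) →
        ∀ x : EuclideanSpace ℝ (Fin n), ‖x‖ ≤ 2 →
          |(Cns / 2) * ∫ y, (2 * g x - g (x + y) - g (x - y)) / ‖y‖ ^ ((n:ℝ) + 2*s)|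
            ≤ C * (ε ^ (2*s) + ε ^ (2 - 2*s)) :=
  fracLap_small_support_bound_general n hn s hs Cns C0 hC0
end

section
/- Let $n \ge 3$, $M > 0$, $\sigma = \frac{2M+1}{n}$, and $\alpha \in (0,1)$. For $\epsilon \in (0,1)$ define $\varphi_\epsilon(x) = 1 + \sigma|x|^2 - (\epsilon/|x|)^\alpha$ for $x \ne 0$. Let $\vec{b} \in C^1(B_1;\mathbb{R}^n)$ with $\|\vec{b}\|_{C^1(B_1)} \le M$. Then there exists $r_0 \in (0,1)$, depending only on $n$, $\alpha$ and $M$ (not on $\epsilon$), such that for all $x$ with $0 < |x| \le r_0$: $-\Delta\varphi_\epsilon(x) - \vec{b}(x)\cdot\nabla\varphi_\epsilon(x) + (2M+1)\varphi_\epsilon(x) < 0$. -/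
/-!
Write `r = ‖x‖` and `φ_ε = 1 + σ r² - ε^α r^(-α)`. Its gradient is `c x` with
`c = 2σ + α ε^α r^(-α-2)`, and differentiating `c(z) ⟪z, eᵢ⟫` once more gives
`Δφ_ε = 2nσ + α ε^α (n - α - 2) r^(-α-2)`. Since `nσ = 2M + 1` and `|b·x| ≤ M r`, the operator
applied to `φ_ε` is at most `-(2M+1) + σ(2M r + (2M+1) r²) + α ε^α r^(-α-2) (α + 2 - n + M r)`.
For `r ≤ (1-α)/(4M+1)` the singular term is `≤ 0` (as `n ≥ 3`) and the middle one is
`≤ σ ≤ (2M+1)/3`, whatever `ε` is.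
-/

open MeasureTheory Metric Real Filter Topology
open scoped RealInnerProductSpace

section InnerProductSpace

variable {E : Type*} [NormedAddCommGroup E] [InnerProductSpace ℝ E]

theorem hasFDerivAt_norm_rpow_of_ne_zero {x : E} (hx : x ≠ 0) (p : ℝ) :
    HasFDerivAt (fun w : E ↦ ‖w‖ ^ p) ((p * ‖x‖ ^ (p - 2)) • innerSL ℝ x) x := by
  apply HasStrictFDerivAt.hasFDerivAt
  convert! (hasStrictFDerivAt_norm_sq x).rpow_const (p := p / 2) (by simp [hx]) using 0
  simp_rw [← Real.rpow_natCast_mul (norm_nonneg _), ← Nat.cast_smul_eq_nsmul ℝ, smul_smul]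
  ring_nf

theorem fderiv_fderiv_apply_of_hasFDerivAt_smul_innerSL {f c : E → ℝ} {c' : E →L[ℝ] ℝ} {x : E}
    (hf : ∀ᶠ z in 𝓝 x, HasFDerivAt f (c z • innerSL ℝ z) z) (hc : HasFDerivAt c c' x)
    (v : E) :
    fderiv ℝ (fun z ↦ fderiv ℝ f z v) x v = c x * ‖v‖ ^ 2 + c' v * ⟪x, v⟫ := by
  have hfv : (fun z ↦ fderiv ℝ f z v) =ᶠ[𝓝 x] fun z ↦ c z * innerSL ℝ v z :=
    hf.mono fun z hz ↦ by simp [hz.fderiv, real_inner_comm]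
  have hprod : HasFDerivAt (fun z ↦ c z * innerSL ℝ v z) _ x := hc.mul (innerSL ℝ v).hasFDerivAt
  rw [hfv.fderiv_eq, hprod.fderiv]
  simp only [coe_innerSL_apply, real_inner_comm, add_apply, smul_apply, real_inner_self_eq_norm_sq,
    smul_eq_mul]
  ring

/-- `φ_ε` is `barrier σ (ε ^ α) α`. -/
noncomputable def barrier (σ A α : ℝ) (w : E) : ℝ := 1 + σ * ‖w‖ ^ 2 - A * ‖w‖ ^ (-α)

theorem hasFDerivAt_barrier (σ A α : ℝ) {z : E} (hz : z ≠ 0) :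
    HasFDerivAt (barrier σ A α) ((2 * σ + α * A * ‖z‖ ^ (-α - 2)) • innerSL ℝ z) z := by
  have h := (((hasStrictFDerivAt_norm_sq z).hasFDerivAt.const_mul σ).const_add 1).sub
    ((hasFDerivAt_norm_rpow_of_ne_zero hz (-α)).const_mul A)
  refine h.congr_fderiv ?_
  ext v
  simp only [neg_mul, neg_smul, smul_neg, sub_neg_eq_add, add_apply, smul_apply, coe_innerSL_apply,
    nsmul_eq_mul, Nat.cast_ofNat, smul_eq_mul]
  ring

theorem hasFDerivAt_barrier_gradient_coeff (σ A α : ℝ) {x : E} (hx : x ≠ 0) :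
    HasFDerivAt (fun w : E ↦ 2 * σ + α * A * ‖w‖ ^ (-α - 2))
      ((α * A * ((-α - 2) * ‖x‖ ^ (-α - 4))) • innerSL ℝ x) x := by
  have h := ((hasFDerivAt_norm_rpow_of_ne_zero hx (-α - 2)).const_mul (α * A)).const_add (2 * σ)
  refine h.congr_fderiv ?_
  ext v
  simp only [smul_apply, coe_innerSL_apply, smul_eq_mul]
  ring_nf

theorem gradient_barrier [CompleteSpace E] (σ A α : ℝ) {x : E} (hx : x ≠ 0) :
    gradient (barrier σ A α) x = (2 * σ + α * A * ‖x‖ ^ (-α - 2)) • x := by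
  refine HasGradientAt.gradient ?_
  rw [hasGradientAt_iff_hasFDerivAt]
  refine (hasFDerivAt_barrier σ A α hx).congr_fderiv ?_
  ext v
  simp

end InnerProductSpace

section EuclideanSpace

variable {n : ℕ}

theorem sum_fderiv_fderiv_single_of_hasFDerivAt_smul_innerSL
    {f c : EuclideanSpace ℝ (Fin n) → ℝ} {k : ℝ} {x : EuclideanSpace ℝ (Fin n)}
    (hf : ∀ᶠ z in 𝓝 x, HasFDerivAt f (c z • innerSL ℝ z) z)
    (hc : HasFDerivAt c (k • innerSL ℝ x) x) :
    ∑ i, fderiv ℝ (fun z ↦ fderiv ℝ f z (EuclideanSpace.single i 1)) x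
      (EuclideanSpace.single i 1) = n * c x + k * ‖x‖ ^ 2 := by
  simp only [fderiv_fderiv_apply_of_hasFDerivAt_smul_innerSL hf hc, PiLp.norm_single, norm_one,
    FunLike.coe_smul, Pi.smul_apply, smul_eq_mul, innerSL_apply_apply,
    EuclideanSpace.inner_single_right, one_mul, Finset.sum_add_distrib,
    EuclideanSpace.real_norm_sq_eq, Finset.mul_sum]
  simp [mul_assoc, sq]

theorem sum_fderiv_fderiv_single_barrier (σ A α : ℝ) {x : EuclideanSpace ℝ (Fin n)}
    (hx : x ≠ 0) :
    ∑ i, fderiv ℝ (fun z ↦ fderiv ℝ (barrier σ A α) z (EuclideanSpace.single i 1)) x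
      (EuclideanSpace.single i 1) = 2 * n * σ + α * A * (n - α - 2) * ‖x‖ ^ (-α - 2) := by
  have hpow : ‖x‖ ^ (-α - 4) * ‖x‖ ^ 2 = ‖x‖ ^ (-α - 2) := by
    rw [← rpow_natCast, ← rpow_add (norm_pos_iff.mpr hx)]
    norm_num
    ring_nf
  rw [sum_fderiv_fderiv_single_of_hasFDerivAt_smul_innerSL
    ((eventually_ne_nhds hx).mono fun z hz ↦ hasFDerivAt_barrier σ A α hz)
    (hasFDerivAt_barrier_gradient_coeff σ A α hx)]
  linear_combination α * A * (-α - 2) * hpow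

end EuclideanSpace

theorem barrier_operator_scalar_neg {n M α σ r P β : ℝ} (hn : 3 ≤ n) (hM : 0 ≤ M)
    (hα : α ∈ Set.Ioo (0 : ℝ) 1) (hσn : σ * n = 2 * M + 1) (hP : 0 ≤ P) (hr : 0 ≤ r)
    (hr0 : r ≤ (1 - α) / (4 * M + 1)) (hβ : |β| ≤ M * r) :
    -(2 * n * σ + α * P * (n - α - 2)) - (2 * σ + α * P) * β
      + (2 * M + 1) * (1 + σ * r ^ 2 - P * r ^ 2) < 0 := by
  obtain ⟨hα0, hα1⟩ := hα
  have hσ0 : 0 < σ := by nlinarith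
  have hσ3 : 3 * σ ≤ 2 * M + 1 := by nlinarith
  have hr1 : r * (4 * M + 1) ≤ 1 - α := (le_div_iff₀ (by positivity)).mp hr0
  have hdecay : α * P * (α + 2 - n + M * r) ≤ 0 :=
    mul_nonpos_of_nonneg_of_nonpos (by positivity) (by nlinarith)
  have hdrift : (2 * σ + α * P) * -β ≤ (2 * σ + α * P) * (M * r) :=
    mul_le_mul_of_nonneg_left (by linarith [neg_abs_le β]) (by positivity)
  have hquad : σ * (2 * M * r + (2 * M + 1) * r ^ 2) ≤ σ :=
    mul_le_of_le_one_right hσ0.le (by nlinarith)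
  have hmass : 0 ≤ (2 * M + 1) * (P * r ^ 2) := by positivity
  linarith

theorem barrier_function_subsolution_dim_ge_three_general
    (n : ℕ) (hn : 3 ≤ n) (M : ℝ) (hM : 0 < M)
    (α : ℝ) (hα : α ∈ Set.Ioo (0:ℝ) 1)
    (σ : ℝ) (hσ : σ = (2*M + 1) / n)
    (b : EuclideanSpace ℝ (Fin n) → EuclideanSpace ℝ (Fin n))
    (hbM : ∀ x ∈ ball (0 : EuclideanSpace ℝ (Fin n)) 1,
      ‖b x‖ ≤ M ∧ ‖fderiv ℝ b x‖ ≤ M) :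
    ∃ r0 ∈ Set.Ioo (0:ℝ) 1, ∀ ε ∈ Set.Ioo (0:ℝ) 1,
      ∀ φ : EuclideanSpace ℝ (Fin n) → ℝ,
        (∀ z, φ z = 1 + σ * ‖z‖ ^ 2 - (ε / ‖z‖) ^ α) →
        ∀ x : EuclideanSpace ℝ (Fin n), 0 < ‖x‖ → ‖x‖ ≤ r0 →
          -(∑ i, fderiv ℝ (fun z => fderiv ℝ φ z (EuclideanSpace.single i 1)) x
              (EuclideanSpace.single i 1))
            - ⟪b x, gradient φ x⟫ + (2*M + 1) * φ x < 0 := by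
  have hr0 : (1 - α) / (4 * M + 1) ∈ Set.Ioo (0 : ℝ) 1 :=
    ⟨div_pos (by linarith [hα.2]) (by positivity),
      (div_lt_one (by positivity)).mpr (by linarith [hα.1])⟩
  refine ⟨_, hr0, fun ε hε φ hφ x hx hxr ↦ ?_⟩
  obtain rfl : φ = barrier σ (ε ^ α) α := funext fun z ↦ by
    rw [hφ, barrier, div_rpow hε.1.le (norm_nonneg z), div_eq_mul_inv, ← rpow_neg (norm_nonneg z)]
  have hx0 : x ≠ 0 := norm_pos_iff.mp hx
  have hbx : |⟪b x, x⟫| ≤ M * ‖x‖ := (abs_real_inner_le_norm _ _).trans <|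
    mul_le_mul_of_nonneg_right (hbM x (mem_ball_zero_iff.mpr (hxr.trans_lt hr0.2))).1 hx.le
  have hpow : ‖x‖ ^ (-α) = ‖x‖ ^ (-α - 2) * ‖x‖ ^ 2 := by
    rw [← rpow_natCast, ← rpow_add hx]
    norm_num
  have hσn : σ * n = 2 * M + 1 := by rw [hσ, div_mul_cancel₀ _ (by positivity : (n : ℝ) ≠ 0)]
  rw [sum_fderiv_fderiv_single_barrier σ _ α hx0, gradient_barrier σ _ α hx0, inner_smul_right,
    barrier, hpow]
  linarith [barrier_operator_scalar_neg (by exact_mod_cast hn) hM.le hα hσn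
    (mul_nonneg (rpow_nonneg hε.1.le α) (rpow_nonneg hx.le (-α - 2))) hx.le hxr hbx]

/-- For `n ≥ 3`, `σ = (2M+1)/n` and `φ_ε(x) = 1 + σ|x|² - (ε/|x|)^α`, there is `r₀ ∈ (0,1)`
depending only on `n`, `α`, `M` (not on `ε`) such that
`-Δφ_ε - b·∇φ_ε + (2M+1)φ_ε < 0` on `0 < |x| ≤ r₀`, whenever `‖b‖_{C¹(B₁)} ≤ M`. -/
theorem barrier_function_subsolution_dim_ge_three
    (n : ℕ) (hn : 3 ≤ n) (M : ℝ) (hM : 0 < M)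
    (α : ℝ) (hα : α ∈ Set.Ioo (0:ℝ) 1)
    (σ : ℝ) (hσ : σ = (2*M + 1) / n)
    (b : EuclideanSpace ℝ (Fin n) → EuclideanSpace ℝ (Fin n))
    (hb : ContDiffOn ℝ 1 b (ball (0 : EuclideanSpace ℝ (Fin n)) 1))
    (hbM : ∀ x ∈ ball (0 : EuclideanSpace ℝ (Fin n)) 1,
      ‖b x‖ ≤ M ∧ ‖fderiv ℝ b x‖ ≤ M) :
    ∃ r0 ∈ Set.Ioo (0:ℝ) 1, ∀ ε ∈ Set.Ioo (0:ℝ) 1,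
      ∀ φ : EuclideanSpace ℝ (Fin n) → ℝ,
        (∀ z, φ z = 1 + σ * ‖z‖ ^ 2 - (ε / ‖z‖) ^ α) →
        ∀ x : EuclideanSpace ℝ (Fin n), 0 < ‖x‖ → ‖x‖ ≤ r0 →
          -(∑ i, fderiv ℝ (fun z => fderiv ℝ φ z (EuclideanSpace.single i 1)) x
              (EuclideanSpace.single i 1))
            - ⟪b x, gradient φ x⟫ + (2*M + 1) * φ x < 0 :=
  barrier_function_subsolution_dim_ge_three_general n hn M hM α hα σ hσ b hbM
end

section
/- Let $n = 2$, $M > 0$, $\sigma = \frac{2M+1}{2}$, and $\alpha \in (0,1)$. For $\epsilon \in (0,1)$ define $\varphi_\epsilon(x) = 1 + \sigma|x|^2 - \left(\frac{\ln|x|}{\ln\epsilon}\right)^\alpha$ for $0 < |x| < 1$ (where $\ln|x|/\ln\epsilon > 0$ for $|x|,\epsilon \in (0,1)$). Let $\vec{b} \in C^1(B_1;\mathbb{R}^2)$ with $\|\vec{b}\|_{C^1(B_1)} \le M$. Then there exists $r_0 \in (0,1)$, depending only on $\alpha$ and $M$ and not on $\epsilon$, such that for all $x$ with $0 < |x| \le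 r_0$: $-\Delta\varphi_\epsilon(x) - \vec{b}(x)\cdot\nabla\varphi_\epsilon(x) + (2M+1)\varphi_\epsilon(x) < 0$. -/
/-!
Write `φ_ε(z) = F(‖z‖²)` with `F(u) = 1 + σu - (log u / (2 log ε))^α`. For such a function
`Δφ = 2n F' + 4‖z‖² F''` and `∇φ = 2F' z`; in the plane the first-order part of `Δ` cancels
(`log ‖z‖` is harmonic), leaving `Δφ_ε = 4σ + 4(1-α)A` with `A > 0`. The drift can cost at
most `2M‖z‖F' = 2σM‖z‖ + 4M‖z‖(-log ‖z‖)A`, so the gain `4(1-α)A` absorbs the singular part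
once `M r (-log r) ≤ 1 - α`, and the rest, `-2σ + 2σ(M r + σ r²)`, is negative for small `r`.
Both conditions involve only `α` and `M`.
-/

open MeasureTheory Metric Real
open scoped RealInnerProductSpace

section NormSqComposition

variable {E : Type*} [NormedAddCommGroup E] [InnerProductSpace ℝ E] {F : ℝ → ℝ} {x : E}

theorem HasDerivAt.hasFDerivAt_comp_norm_sq {F' : ℝ} (hF : HasDerivAt F F' (‖x‖ ^ 2)) :
    HasFDerivAt (fun z => F (‖z‖ ^ 2)) ((2 * F') • innerSL ℝ x) x :=
  (hF.comp_hasFDerivAt x (hasStrictFDerivAt_norm_sq x).hasFDerivAt).congr_fderiv <| by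
    ext v; simp; ring

theorem HasDerivAt.gradient_comp_norm_sq [CompleteSpace E] {F' : ℝ}
    (hF : HasDerivAt F F' (‖x‖ ^ 2)) :
    gradient (fun z => F (‖z‖ ^ 2)) x = (2 * F') • x :=
  (hasGradientAt_iff_hasFDerivAt.mpr <| hF.hasFDerivAt_comp_norm_sq.congr_fderiv <| by
    ext v; simp).gradient

theorem fderiv_fderiv_comp_norm_sq_apply {F' : ℝ → ℝ} {F'' : ℝ}
    (hF : ∀ᶠ u in nhds (‖x‖ ^ 2), HasDerivAt F (F' u) u)
    (hF' : HasDerivAt F' F'' (‖x‖ ^ 2)) (v : E) :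
    fderiv ℝ (fun z => fderiv ℝ (fun z => F (‖z‖ ^ 2)) z v) x v
      = 2 * F' (‖x‖ ^ 2) * ‖v‖ ^ 2 + 4 * F'' * ⟪x, v⟫ ^ 2 := by
  have hnear : (fun z => fderiv ℝ (fun z => F (‖z‖ ^ 2)) z v) =ᶠ[nhds x]
      fun z => 2 * F' (‖z‖ ^ 2) * ⟪v, z⟫ := by
    filter_upwards [((continuous_norm.pow 2).tendsto x).eventually hF] with z hz
    simp [hz.hasFDerivAt_comp_norm_sq.fderiv, real_inner_comm]
  rw [hnear.fderiv_eq]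
  have h := (hF'.hasFDerivAt_comp_norm_sq.const_mul 2).mul ((innerSL ℝ v).hasFDerivAt (x := x))
  simp only [Pi.mul_def, innerSL_apply_apply] at h
  rw [h.fderiv]
  simp only [add_apply, smul_apply, coe_innerSL_apply,
    real_inner_self_eq_norm_sq, real_inner_comm, smul_eq_mul]
  ring

theorem sum_fderiv_fderiv_comp_norm_sq {ι : Type*} [Fintype ι] (e : OrthonormalBasis ι ℝ E)
    {F' : ℝ → ℝ} {F'' : ℝ}
    (hF : ∀ᶠ u in nhds (‖x‖ ^ 2), HasDerivAt F (F' u) u)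
    (hF' : HasDerivAt F' F'' (‖x‖ ^ 2)) :
    ∑ i, fderiv ℝ (fun z => fderiv ℝ (fun z => F (‖z‖ ^ 2)) z (e i)) x (e i)
      = 2 * Fintype.card ι * F' (‖x‖ ^ 2) + 4 * ‖x‖ ^ 2 * F'' := by
  simp only [fderiv_fderiv_comp_norm_sq_apply hF hF', Finset.sum_add_distrib, ← Finset.mul_sum,
    e.sum_sq_inner_left, e.orthonormal.1, one_pow, Finset.sum_const, Finset.card_univ,
    nsmul_eq_mul, mul_one]
  ring

end NormSqComposition

theorem hasDerivAt_rpow_log_div {k β u : ℝ} (hs : log u / k ≠ 0) :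
    HasDerivAt (fun v => (log v / k) ^ β) (β * (log u / k) ^ (β - 1) / (k * u)) u := by
  have hu : u ≠ 0 := by rintro rfl; simp at hs
  refine ((hasDerivAt_rpow_const (p := β) (Or.inl hs)).comp u
    ((hasDerivAt_log hu).div_const k)).congr_deriv ?_
  field_simp

/-- `φ_ε(z) = barrierProfile σ α (2 * log ε) (‖z‖ ^ 2)`. -/
noncomputable def barrierProfile (σ α k u : ℝ) : ℝ := 1 + σ * u - (log u / k) ^ α

noncomputable def barrierProfileDeriv (σ α k u : ℝ) : ℝ :=
  σ - α * (log u / k) ^ (α - 1) / (k * u)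

noncomputable def barrierProfileDeriv2 (α k u : ℝ) : ℝ :=
  α * (1 - α) * (log u / k) ^ (α - 2) / (k * u) ^ 2 + α * (log u / k) ^ (α - 1) / (k * u ^ 2)

theorem hasDerivAt_barrierProfile {σ α k u : ℝ} (hs : log u / k ≠ 0) :
    HasDerivAt (barrierProfile σ α k) (barrierProfileDeriv σ α k u) u := by
  refine (((hasDerivAt_id u).const_mul σ).const_add 1 |>.sub
    (hasDerivAt_rpow_log_div hs)).congr_deriv ?_
  simp [barrierProfileDeriv]

theorem hasDerivAt_barrierProfileDeriv {σ α k u : ℝ} (hs : log u / k ≠ 0) :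
    HasDerivAt (barrierProfileDeriv σ α k) (barrierProfileDeriv2 α k u) u := by
  have hu : u ≠ 0 := by rintro rfl; simp at hs
  have hk : k ≠ 0 := by rintro rfl; simp at hs
  refine ((hasDerivAt_const u σ).sub
    (((hasDerivAt_rpow_log_div (β := α - 1) hs).const_mul α).div
      ((hasDerivAt_id u).const_mul k) (by simp [hu, hk]))).congr_deriv ?_
  rw [barrierProfileDeriv2, show α - 1 - 1 = α - 2 by ring, id]
  field_simp
  ring

theorem barrierProfile_planar_laplacian {σ α k u : ℝ} (hk : k ≠ 0) (hu : u ≠ 0) :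
    2 * 2 * barrierProfileDeriv σ α k u + 4 * u * barrierProfileDeriv2 α k u
      = 4 * σ + 4 * α * (1 - α) * (log u / k) ^ (α - 2) / (k ^ 2 * u) := by
  unfold barrierProfileDeriv barrierProfileDeriv2
  field_simp
  ring

theorem mul_neg_log_le_two_mul_sqrt {t : ℝ} (ht : 0 < t) : t * -log t ≤ 2 * √t := by
  have h := log_le_self (inv_nonneg.mpr (sqrt_nonneg t))
  rw [log_inv, log_sqrt ht.le] at h
  calc t * -log t ≤ t * (2 * (√t)⁻¹) := by gcongr; linarith
    _ = 2 * √t := by rw [mul_left_comm, ← div_eq_mul_inv, div_sqrt]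

theorem barrierProfile_subsolution_scalar {M σ α k t P : ℝ} (hσ : σ = (2 * M + 1) / 2)
    (hα : α ∈ Set.Ioo 0 1) (hk : k < 0) (ht : t ∈ Set.Ioo 0 1) (hP : |P| ≤ M * t)
    (hsmall : M * t * -log t ≤ 1 - α) (hlow : M * t + σ * t ^ 2 < 1) :
    -(2 * 2 * barrierProfileDeriv σ α k (t ^ 2) + 4 * t ^ 2 * barrierProfileDeriv2 α k (t ^ 2))
      - 2 * barrierProfileDeriv σ α k (t ^ 2) * P + (2 * M + 1) * barrierProfile σ α k (t ^ 2)
      < 0 := by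
  obtain ⟨hα0, hα1⟩ := hα
  obtain ⟨ht0, ht1⟩ := ht
  have hσ0 : 0 < σ := by rw [hσ]; nlinarith [abs_nonneg P]
  set s := log (t ^ 2) / k with hs_def
  have hs : 0 < s := div_pos_of_neg_of_neg (log_neg (by positivity) (by nlinarith)) hk
  have hsk : s * k = 2 * log t := by
    rw [hs_def, div_mul_cancel₀ _ hk.ne, log_pow]; push_cast; ring
  -- both the gain of the Laplacian and the singular loss from the drift are multiples of `A`
  set A := α * s ^ (α - 2) / (k ^ 2 * t ^ 2) with hA_def
  have hA : 0 ≤ A := by positivity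
  have hD : barrierProfileDeriv σ α k (t ^ 2) = σ - 2 * log t * A := by
    rw [barrierProfileDeriv, hA_def, ← hs_def, ← hsk,
      show α - 1 = (α - 2) + 1 by ring, rpow_add_one hs.ne']
    field_simp
  have hgain : 4 * α * (1 - α) * s ^ (α - 2) / (k ^ 2 * t ^ 2) = 4 * (1 - α) * A := by
    rw [hA_def]; ring
  rw [barrierProfile_planar_laplacian hk.ne (by positivity), barrierProfile, ← hs_def, hgain, hD,
    show 2 * M + 1 = 2 * σ by rw [hσ]; ring]
  have hdrift : -(2 * (σ - 2 * log t * A) * P) ≤ 2 * (σ - 2 * log t * A) * (M * t) := by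
    have : 0 ≤ σ - 2 * log t * A := by nlinarith [log_neg ht0 ht1]
    nlinarith [neg_abs_le P]
  have hloss := mul_le_mul_of_nonneg_right hsmall hA
  have hrest := mul_lt_mul_of_pos_left hlow hσ0
  have hsα : 0 ≤ σ * s ^ α := by positivity
  linarith

noncomputable def barrierRadius (M α : ℝ) : ℝ :=
  min (((1 - α) / (2 * M)) ^ 2) (1 / (2 * M + 1))

theorem barrierRadius_mem_Ioo {M α : ℝ} (hM : 0 < M) (hα : α < 1) :
    barrierRadius M α ∈ Set.Ioo 0 1 :=
  ⟨lt_min (by have := sub_pos.mpr hα; positivity) (by positivity),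
    (min_le_right _ _).trans_lt <| by rw [div_lt_one (by linarith)]; linarith⟩

theorem mul_mul_neg_log_le_of_le_barrierRadius {M α t : ℝ} (hM : 0 < M) (hα : α < 1)
    (ht : 0 < t) (htr : t ≤ barrierRadius M α) : M * t * -log t ≤ 1 - α := by
  have hsqrt : √t ≤ (1 - α) / (2 * M) :=
    (sqrt_le_left (by have := sub_pos.mpr hα; positivity)).mpr (le_min_iff.mp htr).1
  calc M * t * -log t ≤ M * (2 * √t) := by
        rw [mul_assoc]; exact mul_le_mul_of_nonneg_left (mul_neg_log_le_two_mul_sqrt ht) hM.le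
    _ ≤ M * (2 * ((1 - α) / (2 * M))) := by gcongr
    _ = 1 - α := by field_simp

theorem mul_add_mul_sq_lt_one_of_le_barrierRadius {M α t : ℝ} (hM : 0 < M) (ht : 0 < t)
    (htr : t ≤ barrierRadius M α) : M * t + (2 * M + 1) / 2 * t ^ 2 < 1 := by
  have h := (le_min_iff.mp htr).2
  rw [le_div_iff₀ (by linarith)] at h
  nlinarith

theorem barrier_function_subsolution_dim_two_general
    (M : ℝ) (hM : 0 < M)
    (α : ℝ) (hα : α ∈ Set.Ioo (0:ℝ) 1)
    (σ : ℝ) (hσ : σ = (2*M + 1) / 2)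
    (b : EuclideanSpace ℝ (Fin 2) → EuclideanSpace ℝ (Fin 2))
    (hbM : ∀ x ∈ ball (0 : EuclideanSpace ℝ (Fin 2)) 1,
      ‖b x‖ ≤ M ∧ ‖fderiv ℝ b x‖ ≤ M) :
    ∃ r0 ∈ Set.Ioo (0:ℝ) 1, ∀ ε ∈ Set.Ioo (0:ℝ) 1,
      ∀ φ : EuclideanSpace ℝ (Fin 2) → ℝ,
        (∀ z, φ z = 1 + σ * ‖z‖ ^ 2 - (Real.log ‖z‖ / Real.log ε) ^ α) →
        ∀ x : EuclideanSpace ℝ (Fin 2), 0 < ‖x‖ → ‖x‖ ≤ r0 →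
          -(∑ i, fderiv ℝ (fun z => fderiv ℝ φ z (EuclideanSpace.single i 1)) x
              (EuclideanSpace.single i 1))
            - ⟪b x, gradient φ x⟫ + (2*M + 1) * φ x < 0 := by
  obtain ⟨hr0, hr1⟩ := barrierRadius_mem_Ioo hM hα.2
  refine ⟨barrierRadius M α, ⟨hr0, hr1⟩, fun ε hε φ hφ x hx0 hxr => ?_⟩
  set t := ‖x‖
  have ht1 : t < 1 := hxr.trans_lt hr1
  have hk : 2 * log ε < 0 := by linarith [log_neg hε.1 hε.2]
  obtain rfl : φ = fun z => barrierProfile σ α (2 * log ε) (‖z‖ ^ 2) := by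
    ext z; rw [hφ, barrierProfile, log_pow, Nat.cast_ofNat, mul_div_mul_left _ _ two_ne_zero]
  have hs : ∀ u ∈ Set.Ioo (0 : ℝ) 1, log u / (2 * log ε) ≠ 0 :=
    fun u hu => (div_pos_of_neg_of_neg (log_neg hu.1 hu.2) hk).ne'
  have ht2 : t ^ 2 ∈ Set.Ioo (0 : ℝ) 1 := ⟨by positivity, by nlinarith⟩
  have hF := Filter.eventually_of_mem (Ioo_mem_nhds ht2.1 ht2.2)
    fun u hu => hasDerivAt_barrierProfile (σ := σ) (α := α) (hs u hu)
  simp only [← EuclideanSpace.basisFun_apply]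
  rw [sum_fderiv_fderiv_comp_norm_sq _ hF (hasDerivAt_barrierProfileDeriv (hs _ ht2)),
    (hasDerivAt_barrierProfile (hs _ ht2)).gradient_comp_norm_sq, inner_smul_right,
    Fintype.card_fin, Nat.cast_ofNat]
  have hP : |⟪b x, x⟫| ≤ M * t :=
    (abs_real_inner_le_norm _ _).trans
      (by gcongr; exact (hbM x (mem_ball_zero_iff.mpr ht1)).1)
  exact barrierProfile_subsolution_scalar hσ hα hk ⟨hx0, ht1⟩ hP
    (mul_mul_neg_log_le_of_le_barrierRadius hM hα.2 hx0 hxr)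
    (hσ ▸ mul_add_mul_sq_lt_one_of_le_barrierRadius hM hx0 hxr)

/-- For `n = 2`, `σ = (2M+1)/2` and `φ_ε(x) = 1 + σ|x|² - (ln|x|/ln ε)^α`, there is
`r₀ ∈ (0,1)` depending only on `α`, `M` (not on `ε`) such that
`-Δφ_ε - b·∇φ_ε + (2M+1)φ_ε < 0` on `0 < |x| ≤ r₀`, whenever `‖b‖_{C¹(B₁)} ≤ M`. -/
theorem barrier_function_subsolution_dim_two
    (M : ℝ) (hM : 0 < M)
    (α : ℝ) (hα : α ∈ Set.Ioo (0:ℝ) 1)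
    (σ : ℝ) (hσ : σ = (2*M + 1) / 2)
    (b : EuclideanSpace ℝ (Fin 2) → EuclideanSpace ℝ (Fin 2))
    (hb : ContDiffOn ℝ 1 b (ball (0 : EuclideanSpace ℝ (Fin 2)) 1))
    (hbM : ∀ x ∈ ball (0 : EuclideanSpace ℝ (Fin 2)) 1,
      ‖b x‖ ≤ M ∧ ‖fderiv ℝ b x‖ ≤ M) :
    ∃ r0 ∈ Set.Ioo (0:ℝ) 1, ∀ ε ∈ Set.Ioo (0:ℝ) 1,
      ∀ φ : EuclideanSpace ℝ (Fin 2) → ℝ,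
        (∀ z, φ z = 1 + σ * ‖z‖ ^ 2 - (Real.log ‖z‖ / Real.log ε) ^ α) →
        ∀ x : EuclideanSpace ℝ (Fin 2), 0 < ‖x‖ → ‖x‖ ≤ r0 →
          -(∑ i, fderiv ℝ (fun z => fderiv ℝ φ z (EuclideanSpace.single i 1)) x
              (EuclideanSpace.single i 1))
            - ⟪b x, gradient φ x⟫ + (2*M + 1) * φ x < 0 :=
  barrier_function_subsolution_dim_two_general M hM α hα σ hσ b hbM
end

section
/- Let $n \ge 1$ and let $u : \mathbb{R}^n \to \mathbb{R}$ be smooth with $\{u > 0\}$ bounded, and let $\vec{b} \in C^1(\mathbb{R}^n;\mathbb{R}^n)$ with $\|\vec{b}\|_{C^1(\mathbb{R}^n)} \le K$. Let $u^+ = \max\{u,0\}$, and for $\delta > 0$ let $J_\delta$ denote mollification with a standard mollifier $j^\delta$ supported in $B_\delta$. Then for every $x \in \mathbb{R}^n$: $|J_\delta(\vec{b}\cdot\nabla u^+)(x) - \vec{b}(x)\cdot\nabla J_\delta u^+(x)| \le K\,\delta\,\|\nabla u\|_{L^\infty(\{u>0\})}\,\chi^\delta_{\{u>0\}}(x)$,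 where $\chi^\delta_{\{u>0\}} = J_\delta(\chi_{\{u>0\}})$ and $\vec{b}\cdot\nabla u^+$ is interpreted as $\vec{b}\cdot\nabla u$ on $\{u > 0\}$ and $0$ elsewhere. -/
open MeasureTheory Metric Real Filter Topology
open scoped RealInnerProductSpace Convolution

lemma exists_phi (ε : ℝ) (hε : 0 < ε) :
    ∃ φ ψ : ℝ → ℝ, ContDiff ℝ 1 φ ∧ (∀ t, HasDerivAt φ (ψ t) t) ∧ Continuous ψ ∧
      (∀ t, 0 ≤ ψ t) ∧ (∀ t, ψ t ≤ 1) ∧ (∀ t, t ≤ ε → ψ t = 0) ∧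
      (∀ t, 2*ε ≤ t → ψ t = 1) ∧ (∀ t, 0 ≤ φ t) ∧ (∀ t, φ t ≤ max t 0) ∧
      (∀ t, |φ t - max t 0| ≤ 2*ε) := by
  set ψ : ℝ → ℝ := fun t => Real.smoothTransition ((t - ε) / ε) with hψdef
  have hψcont : Continuous ψ :=
    Real.smoothTransition.continuous.comp (by fun_prop)
  set φ : ℝ → ℝ := fun t => ∫ s in (0:ℝ)..t, ψ s with hφdef
  have hderiv : ∀ t, HasDerivAt φ (ψ t) t := fun t =>
    (hψcont.integral_hasStrictDerivAt 0 t).hasDerivAt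
  have hψ0 : ∀ t, 0 ≤ ψ t := fun t => Real.smoothTransition.nonneg _
  have hψ1 : ∀ t, ψ t ≤ 1 := fun t => Real.smoothTransition.le_one _
  have hψz : ∀ t, t ≤ ε → ψ t = 0 := by
    intro t ht
    exact Real.smoothTransition.zero_of_nonpos
      (div_nonpos_of_nonpos_of_nonneg (by linarith) hε.le)
  have hψone : ∀ t, 2*ε ≤ t → ψ t = 1 := by
    intro t ht
    exact Real.smoothTransition.one_of_one_le (by rw [le_div_iff₀ hε]; linarith)
  have hφz : ∀ t, t ≤ ε → φ t = 0 := by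
    intro t ht
    have : ∀ s ∈ Set.uIcc (0:ℝ) t, ψ s = (fun _ => (0:ℝ)) s := by
      intro s hs
      refine hψz s ?_
      rcases Set.mem_uIcc.1 hs with ⟨_, h2⟩ | ⟨_, h2⟩
      · exact le_trans h2 ht
      · exact le_trans h2 hε.le
    simp only [hφdef]
    rw [intervalIntegral.integral_congr this, intervalIntegral.integral_zero]
  have hφnn : ∀ t, 0 ≤ φ t := by
    intro t
    rcases le_or_gt t 0 with h | h
    · rw [hφz t (le_trans h hε.le)]
    · exact intervalIntegral.integral_nonneg h.le fun s _ => hψ0 s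
  have hφle : ∀ t, φ t ≤ max t 0 := by
    intro t
    rcases le_or_gt t 0 with h | h
    · rw [hφz t (le_trans h hε.le)]; exact le_max_right _ _
    · refine le_trans ?_ (le_max_left t 0)
      calc φ t ≤ ∫ s in (0:ℝ)..t, (1:ℝ) := by
            refine intervalIntegral.integral_mono_on h.le
              (hψcont.intervalIntegrable 0 t) (intervalIntegrable_const) ?_
            exact fun s _ => hψ1 s
        _ = t := by simp
  refine ⟨φ, ψ, ?_, hderiv, hψcont, hψ0, hψ1, hψz, hψone, hφnn, hφle, ?_⟩
  · rw [contDiff_one_iff_deriv]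
    constructor
    · exact fun t => (hderiv t).differentiableAt
    · have : deriv φ = ψ := funext fun t => (hderiv t).deriv
      rw [this]; exact hψcont
  · intro t
    rw [abs_sub_le_iff]
    constructor
    · linarith [hφle t]
    · rcases le_or_gt t (2*ε) with h | h
      · have : max t 0 ≤ 2*ε := max_le h (by linarith)
        linarith [hφnn t]
      · have hmax : max t 0 = t := max_eq_left (by linarith)
        have hsplit : (∫ s in (0:ℝ)..(2*ε), ψ s) + ∫ s in (2*ε)..t, ψ s = φ t :=
          intervalIntegral.integral_add_adjacent_intervals
            (hψcont.intervalIntegrable _ _) (hψcont.intervalIntegrable _ _)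
        have h1 : (0:ℝ) ≤ ∫ s in (0:ℝ)..(2*ε), ψ s :=
          intervalIntegral.integral_nonneg (by linarith) fun s _ => hψ0 s
        have h2 : (∫ s in (2*ε)..t, ψ s) = t - 2*ε := by
          have : ∀ s ∈ Set.uIcc (2*ε) t, ψ s = (fun _ => (1:ℝ)) s := by
            intro s hs
            refine hψone s ?_
            rcases Set.mem_uIcc.1 hs with ⟨h1', _⟩ | ⟨_, h2'⟩
            · exact h1'
            · linarith
          rw [intervalIntegral.integral_congr this]; simp
        rw [hmax]
        linarith

set_option maxHeartbeats 2000000 in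
/-- Pointwise commutator bound for the mollification of `u⁺`:
`|J_δ(b·∇u⁺)(x) - b(x)·∇(J_δ u⁺)(x)| ≤ K δ ‖∇u‖_{L^∞({u>0})} χ^δ_{u>0}(x)`,
where `b·∇u⁺ = b·∇u` on `{u>0}` and `0` elsewhere and `χ^δ_{u>0} = J_δ(χ_{u>0})`. -/
theorem commutator_mollifier_positive_part_pointwise_bound
    (n : ℕ) (hn : 1 ≤ n)
    (u : EuclideanSpace ℝ (Fin n) → ℝ) (hu : ContDiff ℝ (⊤ : ℕ∞) u)
    (hU : Bornology.IsBounded {x : EuclideanSpace ℝ (Fin n) | 0 < u x})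
    (b : EuclideanSpace ℝ (Fin n) → EuclideanSpace ℝ (Fin n))
    (hb : ContDiff ℝ 1 b) (K : ℝ)
    (hbK : ∀ x, ‖b x‖ ≤ K ∧ ‖fderiv ℝ b x‖ ≤ K)
    (j : EuclideanSpace ℝ (Fin n) → ℝ)
    (hjsmooth : ContDiff ℝ (⊤ : ℕ∞) j) (hjpos : ∀ y, 0 ≤ j y)
    (hjsupp : tsupport j ⊆ closedBall 0 1)
    (hjint : (∫ y, j y) = 1)
    (hjrad : ∀ y z : EuclideanSpace ℝ (Fin n), ‖y‖ = ‖z‖ → j y = j z)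
    (jδ : ℝ → EuclideanSpace ℝ (Fin n) → ℝ)
    (hjδ : ∀ δ y, jδ δ y = δ ^ (-(n:ℝ)) * j (δ⁻¹ • y))
    (δ : ℝ) (hδ : 0 < δ) (x : EuclideanSpace ℝ (Fin n)) :
    |(∫ y, jδ δ (x - y) * (if 0 < u y then ⟪b y, gradient u y⟫ else 0))
        - ⟪b x, gradient (fun z => ∫ y, jδ δ (z - y) * max (u y) 0) x⟫|
      ≤ K * δ * (⨆ y : {y : EuclideanSpace ℝ (Fin n) // 0 < u y},
            ‖gradient u (y : EuclideanSpace ℝ (Fin n))‖)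
          * ∫ y, jδ δ (x - y) * (if 0 < u y then (1:ℝ) else 0) := by
  classical
  have hδ0 : (0:ℝ) ≤ δ := hδ.le
  set L : ℝ →L[ℝ] ℝ →L[ℝ] ℝ := ContinuousLinearMap.lsmul ℝ ℝ with hL_def
  -- mollifier facts
  have hcfun : jδ δ = fun y => δ ^ (-(n:ℝ)) * j (δ⁻¹ • y) := funext (hjδ δ)
  have hc : ContDiff ℝ (⊤ : ℕ∞) (jδ δ) := by
    rw [hcfun]
    exact contDiff_const.mul (hjsmooth.comp (contDiff_id.const_smul δ⁻¹))
  have hc0 : ∀ y, 0 ≤ jδ δ y := fun y => by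
    rw [hjδ δ y]
    exact mul_nonneg (Real.rpow_nonneg hδ0 _) (hjpos _)
  have hcz : ∀ y : EuclideanSpace ℝ (Fin n), δ < ‖y‖ → jδ δ y = 0 := by
    intro y hy
    rw [hjδ δ y]
    have h1 : δ⁻¹ • y ∉ tsupport j := by
      intro hmem
      have h2 := mem_closedBall_zero_iff.1 (hjsupp hmem)
      rw [norm_smul, Real.norm_eq_abs, abs_of_pos (inv_pos.2 hδ)] at h2
      have h3 : (1:ℝ) < δ⁻¹ * ‖y‖ := by
        rw [← inv_mul_cancel₀ hδ.ne']
        exact mul_lt_mul_of_pos_left hy (inv_pos.2 hδ)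
      linarith
    rw [image_eq_zero_of_notMem_tsupport h1, mul_zero]
  have hcc : HasCompactSupport (jδ δ) :=
    HasCompactSupport.intro (isCompact_closedBall 0 δ) fun y hy =>
      hcz y (not_le.1 fun h => hy (mem_closedBall_zero_iff.2 h))
  have hccont : Continuous (jδ δ) := hc.continuous
  have hcint : Integrable (jδ δ) := hccont.integrable_of_hasCompactSupport hcc
  have hcfd : Continuous (fderiv ℝ (jδ δ)) := hc.continuous_fderiv (by simp)
  have hccf : HasCompactSupport (fderiv ℝ (jδ δ)) := hcc.fderiv ℝ
  -- the positive set
  set S := closure {y : EuclideanSpace ℝ (Fin n) | 0 < u y} with hS_def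
  have hScomp : IsCompact S := Metric.isCompact_of_isClosed_isBounded isClosed_closure hU.closure
  have hgradcont : Continuous (gradient u) := by
    exact (InnerProductSpace.toDual ℝ _).symm.continuous.comp (hu.continuous_fderiv (by simp))
  obtain ⟨Cu, hCu⟩ := hScomp.exists_bound_of_continuousOn (hgradcont.continuousOn)
  have hK0 : (0:ℝ) ≤ K := le_trans (norm_nonneg _) (hbK x).1
  set M : ℝ := ⨆ y : {y : EuclideanSpace ℝ (Fin n) // 0 < u y},
      ‖gradient u (y : EuclideanSpace ℝ (Fin n))‖ with hM_def
  have hMbdd : BddAbove (Set.range fun y : {y : EuclideanSpace ℝ (Fin n) // 0 < u y} =>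
      ‖gradient u (y : EuclideanSpace ℝ (Fin n))‖) := by
    refine ⟨max Cu 0, ?_⟩
    rintro r ⟨⟨y, hy⟩, rfl⟩
    exact le_max_of_le_left (hCu y (subset_closure hy))
  have hM : ∀ y : EuclideanSpace ℝ (Fin n), 0 < u y → ‖gradient u y‖ ≤ M :=
    fun y hy => le_ciSup hMbdd ⟨y, hy⟩
  -- the positive part
  set up : EuclideanSpace ℝ (Fin n) → ℝ := fun y => max (u y) 0 with hup_def
  have hupc : Continuous up := hu.continuous.max continuous_const
  have hupcs : HasCompactSupport up :=
    HasCompactSupport.intro hScomp fun y hy =>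
      max_eq_right (le_of_not_gt fun h => hy (subset_closure h))
  have hupli : LocallyIntegrable up volume := hupc.locallyIntegrable
  have hupnn : ∀ y, 0 ≤ up y := fun y => le_max_right _ _
  -- F as a convolution
  set F : EuclideanSpace ℝ (Fin n) → ℝ := fun z => ∫ y, jδ δ (z - y) * max (u y) 0
    with hF_def
  have hFconv : F = (jδ δ) ⋆[L] up := by
    funext z
    have h := integral_sub_left_eq_self (fun t => jδ δ t * up (z - t)) volume z
    simp only [sub_sub_cancel] at h
    rw [convolution_def]
    simp only [hL_def, ContinuousLinearMap.lsmul_apply, smul_eq_mul]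
    exact h
  -- the limit candidate
  set w : EuclideanSpace ℝ (Fin n) → (EuclideanSpace ℝ (Fin n) →L[ℝ] ℝ) :=
    fun y => (if 0 < u y then (1:ℝ) else 0) • fderiv ℝ u y with hw_def
  have husetm : MeasurableSet {y : EuclideanSpace ℝ (Fin n) | 0 < u y} :=
    (isOpen_lt continuous_const hu.continuous).measurableSet
  have hχmeas : Measurable fun y : EuclideanSpace ℝ (Fin n) =>
      (if 0 < u y then (1:ℝ) else 0) :=
    Measurable.ite husetm measurable_const measurable_const
  have hwmeas : AEStronglyMeasurable (fun t => jδ δ t • w (x - t)) volume := by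
    refine AEStronglyMeasurable.smul hccont.aestronglyMeasurable ?_
    refine AEStronglyMeasurable.fun_smul (f := fun t => if 0 < u (x - t) then (1:ℝ) else 0)
      (g := fun t => fderiv ℝ u (x - t)) ?_ ?_
    · exact (hχmeas.comp (measurable_const.sub measurable_id)).aestronglyMeasurable
    · exact ((hu.continuous_fderiv (by simp)).comp
        (continuous_const.sub continuous_id)).aestronglyMeasurable
  have hbound2cont : Continuous fun t => jδ δ t * ‖fderiv ℝ u (x - t)‖ :=
    hccont.mul (((hu.continuous_fderiv (by simp)).comp (continuous_const.sub continuous_id)).norm)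
  have hbound2int : Integrable fun t => jδ δ t * ‖fderiv ℝ u (x - t)‖ :=
    hbound2cont.integrable_of_hasCompactSupport (hcc.mul_right)
  have hwnorm : ∀ y, ‖w y‖ ≤ ‖fderiv ℝ u y‖ := by
    intro y
    have h1 : ‖w y‖ = ‖(if 0 < u y then (1:ℝ) else 0)‖ * ‖fderiv ℝ u y‖ := norm_smul (β := EuclideanSpace ℝ (Fin n) →L[ℝ] ℝ) _ _
    rw [h1, Real.norm_eq_abs]
    rcases lt_or_ge 0 (u y) with h | h
    · rw [if_pos h]; simp
    · rw [if_neg (not_lt.2 h)]; simp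
  have hwle : ∀ t, ‖jδ δ t • w (x - t)‖ ≤ jδ δ t * ‖fderiv ℝ u (x - t)‖ := by
    intro t
    have h1 : ‖jδ δ t • w (x - t)‖ = ‖jδ δ t‖ * ‖w (x - t)‖ := norm_smul (β := EuclideanSpace ℝ (Fin n) →L[ℝ] ℝ) _ _
    rw [h1, Real.norm_eq_abs, abs_of_nonneg (hc0 t)]
    exact mul_le_mul_of_nonneg_left (hwnorm _) (hc0 t)
  have hΦint : Integrable (fun t => jδ δ t • w (x - t)) volume :=
    Integrable.mono' hbound2int hwmeas (Filter.Eventually.of_forall hwle)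
  set Φ : EuclideanSpace ℝ (Fin n) →L[ℝ] ℝ := ∫ t, jδ δ t • w (x - t) with hΦ_def
  -- key step : HasFDerivAt F Φ x
  have hpL : ∀ (A : EuclideanSpace ℝ (Fin n) →L[ℝ] ℝ) (r : ℝ),
      (L.precompL (EuclideanSpace ℝ (Fin n))) A r = r • A := by
    intro A r; ext z
    simp [hL_def, ContinuousLinearMap.lsmul_apply, smul_eq_mul, mul_comm]
  have hpR : ∀ (r : ℝ) (A : EuclideanSpace ℝ (Fin n) →L[ℝ] ℝ),
      (L.precompR (EuclideanSpace ℝ (Fin n))) r A = r • A := by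
    intro r A; ext z
    simp [hL_def, ContinuousLinearMap.lsmul_apply, smul_eq_mul]
  have hkey : HasFDerivAt F Φ x := by
    have hF1 := hcc.hasFDerivAt_convolution_left L (hc.of_le (by simp)) hupli x
    rw [← hFconv] at hF1
    suffices h : (fderiv ℝ (jδ δ) ⋆[L.precompL (EuclideanSpace ℝ (Fin n))] up) x = Φ by
      rwa [h] at hF1
    -- approximations
    choose φ ψ hφ1 hφd hψc hψ0 hψ1 hψz hψone hφnn hφle hφap using
      fun k : ℕ => exists_phi ((k+1:ℝ)⁻¹) (by positivity)
    have htendφ : ∀ s : ℝ, Tendsto (fun k => φ k s) atTop (𝓝 (max s 0)) := by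
      intro s
      rw [tendsto_iff_dist_tendsto_zero]
      refine squeeze_zero (g := fun k : ℕ => 2 * ((k:ℝ)+1)⁻¹) (fun k => dist_nonneg)
        (fun k => by rw [Real.dist_eq]; exact hφap k s) ?_
      have h2 : Tendsto (fun k : ℕ => 2 * ((k:ℝ)+1)⁻¹) atTop (𝓝 (2 * 0)) := by
        refine Tendsto.const_mul 2 ?_
        simpa only [one_div] using tendsto_one_div_add_atTop_nhds_zero_nat (𝕜 := ℝ)
      simpa using h2
    have htendψ : ∀ s : ℝ, Tendsto (fun k => ψ k s) atTop
        (𝓝 (if 0 < s then (1:ℝ) else 0)) := by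
      intro s
      rcases lt_or_ge 0 s with h | h
      · rw [if_pos h]
        refine tendsto_atTop_of_eventually_const (i₀ := ⌈2/s⌉₊) ?_
        intro k hk
        refine hψone k s ?_
        have h1 : 2/s ≤ (k:ℝ) := le_trans (Nat.le_ceil _) (by exact_mod_cast hk)
        have h2 : (2:ℝ) ≤ (k:ℝ) * s := (div_le_iff₀ h).1 h1
        have h3 : (0:ℝ) < (k:ℝ)+1 := by positivity
        have hinv : (0:ℝ) < ((k:ℝ)+1)⁻¹ := by positivity
        have hmc : ((k:ℝ)+1) * ((k:ℝ)+1)⁻¹ = 1 := mul_inv_cancel₀ h3.ne'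
        nlinarith [mul_le_mul_of_nonneg_right
          (show (2:ℝ) ≤ s * ((k:ℝ)+1) by nlinarith) hinv.le]
      · rw [if_neg (not_lt.2 h)]
        refine tendsto_atTop_of_eventually_const (i₀ := 0) ?_
        intro k _
        exact hψz k s (le_trans h (by positivity))
    -- functions v k
    have hv1 : ∀ k, ContDiff ℝ 1 fun y => φ k (u y) :=
      fun k => (hφ1 k).comp (hu.of_le (by simp))
    have hvcs : ∀ k, HasCompactSupport fun y => φ k (u y) := by
      intro k
      refine HasCompactSupport.intro hScomp fun y hy => ?_
      have hu0 : u y ≤ 0 := le_of_not_gt fun h => hy (subset_closure h)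
      have h1 := hφnn k (u y)
      have h2 := hφle k (u y)
      have h3 : max (u y) 0 = 0 := max_eq_right hu0
      linarith [h2.trans_eq h3]
    have hvd : ∀ k (y : EuclideanSpace ℝ (Fin n)),
        HasFDerivAt (fun z => φ k (u z)) (ψ k (u y) • fderiv ℝ u y) y :=
      fun k y => (hφd k (u y)).comp_hasFDerivAt y (hu.differentiable (by simp) y).hasFDerivAt
    have hvfd : ∀ k, fderiv ℝ (fun z => φ k (u z)) = fun y => ψ k (u y) • fderiv ℝ u y :=
      fun k => funext fun y => (hvd k y).fderiv
    -- equality of the two convolution expressions for each k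
    have hAB : ∀ k,
        (fderiv ℝ (jδ δ) ⋆[L.precompL (EuclideanSpace ℝ (Fin n))] fun y => φ k (u y)) x
        = ((jδ δ) ⋆[L.precompR (EuclideanSpace ℝ (Fin n))]
            fderiv ℝ (fun z => φ k (u z))) x := by
      intro k
      exact (hcc.hasFDerivAt_convolution_left L (hc.of_le (by simp))
          ((hv1 k).continuous.locallyIntegrable) x).unique
        ((hvcs k).hasFDerivAt_convolution_right L hccont.locallyIntegrable (hv1 k) x)
    -- rewrite all four convolutions as plain integrals
    have hAint : ∀ k,
        (fderiv ℝ (jδ δ) ⋆[L.precompL (EuclideanSpace ℝ (Fin n))] fun y => φ k (u y)) x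
        = ∫ t, φ k (u (x - t)) • fderiv ℝ (jδ δ) t := by
      intro k
      rw [convolution_def]
      congr 1; funext t; rw [hpL]
    have hA'int :
        (fderiv ℝ (jδ δ) ⋆[L.precompL (EuclideanSpace ℝ (Fin n))] up) x
        = ∫ t, up (x - t) • fderiv ℝ (jδ δ) t := by
      rw [convolution_def]
      congr 1; funext t; rw [hpL]
    have hBint : ∀ k,
        ((jδ δ) ⋆[L.precompR (EuclideanSpace ℝ (Fin n))] fderiv ℝ (fun z => φ k (u z))) x
        = ∫ t, jδ δ t • (ψ k (u (x - t)) • fderiv ℝ u (x - t)) := by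
      intro k
      rw [convolution_def]
      congr 1; funext t; rw [hvfd k, hpR]
    -- limit 1
    have hlim1 : Tendsto (fun k => ∫ t, φ k (u (x - t)) • fderiv ℝ (jδ δ) t) atTop
        (𝓝 (∫ t, up (x - t) • fderiv ℝ (jδ δ) t)) := by
      refine tendsto_integral_of_dominated_convergence
        (fun t => up (x - t) * ‖fderiv ℝ (jδ δ) t‖)
        (fun k => Continuous.aestronglyMeasurable ?_) ?_ (fun k => ?_) ?_
      · exact ((hφ1 k).continuous.comp
          (hu.continuous.comp (continuous_const.sub continuous_id))).smul hcfd
      · exact ((hupc.comp (continuous_const.sub continuous_id)).mul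
          hcfd.norm).integrable_of_hasCompactSupport (hccf.norm.mul_left)
      · refine Filter.Eventually.of_forall fun t => ?_
        rw [norm_smul, Real.norm_eq_abs, abs_of_nonneg (hφnn k _)]
        exact mul_le_mul_of_nonneg_right (hφle k _) (norm_nonneg _)
      · exact Filter.Eventually.of_forall fun t =>
          (htendφ (u (x - t))).smul_const (fderiv ℝ (jδ δ) t)
    -- limit 2
    have hlim2 : Tendsto (fun k => ∫ t, jδ δ t • (ψ k (u (x - t)) • fderiv ℝ u (x - t)))
        atTop (𝓝 Φ) := by
      rw [hΦ_def]
      refine tendsto_integral_of_dominated_convergence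
        (fun t => jδ δ t * ‖fderiv ℝ u (x - t)‖)
        (fun k => Continuous.aestronglyMeasurable ?_) hbound2int (fun k => ?_) ?_
      · exact hccont.smul (((hψc k).comp
          (hu.continuous.comp (continuous_const.sub continuous_id))).smul
            ((hu.continuous_fderiv (by simp)).comp (continuous_const.sub continuous_id)))
      · refine Filter.Eventually.of_forall fun t => ?_
        rw [norm_smul, Real.norm_eq_abs, abs_of_nonneg (hc0 t)]
        refine mul_le_mul_of_nonneg_left ?_ (hc0 t)
        rw [norm_smul, Real.norm_eq_abs]
        calc |ψ k (u (x - t))| * ‖fderiv ℝ u (x - t)‖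
            ≤ 1 * ‖fderiv ℝ u (x - t)‖ := by
              refine mul_le_mul_of_nonneg_right ?_ (norm_nonneg _)
              rw [abs_of_nonneg (hψ0 k _)]; exact hψ1 k _
          _ = ‖fderiv ℝ u (x - t)‖ := one_mul _
      · refine Filter.Eventually.of_forall fun t => ?_
        exact ((htendψ (u (x - t))).smul_const (fderiv ℝ u (x - t))).const_smul (jδ δ t)
    have hlim1' : Tendsto (fun k => ∫ t, φ k (u (x - t)) • fderiv ℝ (jδ δ) t) atTop (𝓝 Φ) := by
      refine hlim2.congr fun k => ?_
      rw [← hBint k, ← hAB k, hAint k]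
    rw [hA'int]
    exact tendsto_nhds_unique hlim1 hlim1'
  -- compute the inner product
  have hinner : ⟪b x, gradient F x⟫
      = ∫ t, jδ δ t * ((if 0 < u (x - t) then (1:ℝ) else 0) * ⟪gradient u (x - t), b x⟫) := by
    have h0 : ⟪b x, gradient F x⟫ = (fderiv ℝ F x) (b x) := by
      rw [real_inner_comm]
      exact InnerProductSpace.toDual_symm_apply
    rw [h0, hkey.fderiv, hΦ_def, ContinuousLinearMap.integral_apply hΦint]
    congr 1; funext t
    rw [hw_def]
    simp only [ContinuousLinearMap.smul_apply, smul_eq_mul]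
    congr 1
    congr 1
    exact (InnerProductSpace.toDual_symm_apply).symm
  -- substitution identities
  have hsub1 : (∫ y, jδ δ (x - y) * (if 0 < u y then ⟪b y, gradient u y⟫ else 0))
      = ∫ t, jδ δ t * (if 0 < u (x - t) then ⟪b (x - t), gradient u (x - t)⟫ else 0) := by
    have h := integral_sub_left_eq_self
      (fun t => jδ δ t * (if 0 < u (x - t) then ⟪b (x - t), gradient u (x - t)⟫ else 0)) volume x
    simp only [sub_sub_cancel] at h
    exact h
  have hsub2 : (∫ y, jδ δ (x - y) * (if 0 < u y then (1:ℝ) else 0))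
      = ∫ t, jδ δ t * (if 0 < u (x - t) then (1:ℝ) else 0) := by
    have h := integral_sub_left_eq_self
      (fun t => jδ δ t * (if 0 < u (x - t) then (1:ℝ) else 0)) volume x
    simp only [sub_sub_cancel] at h
    exact h
  -- integrability helper
  have hintaux : ∀ (C : ℝ) (h : EuclideanSpace ℝ (Fin n) → ℝ), Measurable h →
      (∀ y, |h y| ≤ C) → Integrable (fun t => jδ δ t * h (x - t)) volume := by
    intro C h hm hbd
    have h1 : Integrable (fun t => h (x - t) * jδ δ t) volume :=
      hcint.bdd_mul ((hm.comp (measurable_const.sub measurable_id)).aestronglyMeasurable)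
        (Filter.Eventually.of_forall fun t => by rw [Real.norm_eq_abs]; exact hbd _)
    simpa [mul_comm] using h1
  have hgcont : Continuous fun y => ⟪b y, gradient u y⟫ := (hb.continuous.inner hgradcont)
  have hPcont : Continuous fun y : EuclideanSpace ℝ (Fin n) => ⟪gradient u y, b x⟫ :=
    hgradcont.inner continuous_const
  set C₀ : ℝ := max (K * max Cu 0) 0 with hC₀_def
  have hCu' : ∀ y : EuclideanSpace ℝ (Fin n), 0 < u y → ‖gradient u y‖ ≤ max Cu 0 :=
    fun y hy => le_max_of_le_left (hCu y (subset_closure hy))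
  have hgbd : ∀ y, |(if 0 < u y then ⟪b y, gradient u y⟫ else 0)| ≤ C₀ := by
    intro y
    rcases lt_or_ge 0 (u y) with h | h
    · rw [if_pos h]
      refine le_trans (abs_real_inner_le_norm _ _) (le_max_of_le_left ?_)
      exact mul_le_mul (hbK y).1 (hCu' y h) (norm_nonneg _) hK0
    · rw [if_neg (not_lt.2 h)]; simp [hC₀_def, le_max_right]
  have hPbd : ∀ y, |(if 0 < u y then (1:ℝ) else 0) * ⟪gradient u y, b x⟫| ≤ C₀ := by
    intro y
    rcases lt_or_ge 0 (u y) with h | h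
    · rw [if_pos h, one_mul]
      refine le_trans (abs_real_inner_le_norm _ _) (le_max_of_le_left ?_)
      rw [mul_comm]
      exact mul_le_mul (hbK x).1 (hCu' y h) (norm_nonneg _) hK0
    · rw [if_neg (not_lt.2 h)]; simp [hC₀_def, le_max_right]
  have hintg : Integrable (fun t => jδ δ t *
      (if 0 < u (x - t) then ⟪b (x - t), gradient u (x - t)⟫ else 0)) volume :=
    hintaux C₀ _ (Measurable.ite husetm hgcont.measurable measurable_const) hgbd
  have hintP : Integrable (fun t => jδ δ t *
      ((if 0 < u (x - t) then (1:ℝ) else 0) * ⟪gradient u (x - t), b x⟫)) volume :=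
    hintaux C₀ _ (hχmeas.mul hPcont.measurable) hPbd
  have hintχ : Integrable (fun t => jδ δ t * (if 0 < u (x - t) then (1:ℝ) else 0)) volume := by
    refine hintaux 1 _ hχmeas fun y => ?_
    rcases lt_or_ge 0 (u y) with h | h
    · rw [if_pos h]; simp
    · rw [if_neg (not_lt.2 h)]; simp
  -- Lipschitz bound for b
  have hbl : ∀ y z : EuclideanSpace ℝ (Fin n), ‖b y - b z‖ ≤ K * ‖y - z‖ := fun y z =>
    Convex.norm_image_sub_le_of_norm_fderiv_le
      (fun w _ => (hb.differentiable (by simp)).differentiableAt)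
      (fun w _ => (hbK w).2) convex_univ (Set.mem_univ z) (Set.mem_univ y)
  -- pointwise bound
  have hptw : ∀ t, ‖jδ δ t * (if 0 < u (x - t) then ⟪b (x - t), gradient u (x - t)⟫ else 0)
      - jδ δ t * ((if 0 < u (x - t) then (1:ℝ) else 0) * ⟪gradient u (x - t), b x⟫)‖
      ≤ (K * δ * M) * (jδ δ t * (if 0 < u (x - t) then (1:ℝ) else 0)) := by
    intro t
    rcases eq_or_ne (jδ δ t) 0 with h0 | h0
    · simp [h0]
    · have ht : ‖t‖ ≤ δ := le_of_not_gt fun hlt => h0 (hcz t hlt)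
      have hbb : ‖b (x - t) - b x‖ ≤ K * δ := by
        refine le_trans (hbl (x - t) x) ?_
        have he : ‖x - t - x‖ = ‖t‖ := by rw [show x - t - x = -t by abel, norm_neg]
        rw [he]
        exact mul_le_mul_of_nonneg_left ht hK0
      rcases lt_or_ge 0 (u (x - t)) with h | h
      · simp only [if_pos h]
        rw [Real.norm_eq_abs]
        have hdiff : jδ δ t * ⟪b (x - t), gradient u (x - t)⟫
            - jδ δ t * (1 * ⟪gradient u (x - t), b x⟫)
            = jδ δ t * ⟪b (x - t) - b x, gradient u (x - t)⟫ := by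
          rw [inner_sub_left, real_inner_comm (gradient u (x - t)) (b x)]; ring
        rw [hdiff, abs_mul, abs_of_nonneg (hc0 t)]
        have h2 : |⟪b (x - t) - b x, gradient u (x - t)⟫| ≤ K * δ * M :=
          le_trans (abs_real_inner_le_norm _ _)
            (mul_le_mul hbb (hM _ h) (norm_nonneg _) (mul_nonneg hK0 hδ0))
        calc jδ δ t * |⟪b (x - t) - b x, gradient u (x - t)⟫|
            ≤ jδ δ t * (K * δ * M) := mul_le_mul_of_nonneg_left h2 (hc0 t)
          _ = (K * δ * M) * (jδ δ t * 1) := by ring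
      · simp only [if_neg (not_lt.2 h)]
        simp
  -- final assembly
  rw [hinner, hsub1, hsub2, ← integral_sub hintg hintP, ← Real.norm_eq_abs]
  refine le_trans (norm_integral_le_of_norm_le (hintχ.const_mul (K * δ * M))
    (Filter.Eventually.of_forall hptw)) ?_
  rw [integral_const_mul]
end
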